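/- arXiv:0802.0133 — 8 statements merged into one kernel-verified Lean document; each statement's English description precedes it below -/
import Mathlib

section
/- Let Δ_c be the graph Laplacian of a locally finite simple graph with conductance function c, regarded as a densely defined operator (LinearPMap) on the Hilbert space ℓ²(V) of square-summable complex functions on V, with domain the finitely supported functions. Then for every v in the domain of the adjoint operator Δ_c*, the adjoint acts by the same difference expression: for all x ∈ V, (Δ_c* v)(x) = Σ_{y adjacent to x} c x y · (v(x) − v(y)). -/
/-!
Testing the adjoint against the unit vector `δₓ`, which lies in the domain, gives
`(Δ_c* v)(x) = ⟪Δ_c δₓ, v⟫`. The vector `Δ_c δₓ` is supported on `x` and its neighbours, where it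
equals `Σ_y c x y` and `-c y x` respectively, so the inner product is a finite sum; by the symmetry
of `c` it is exactly `(Δ_c v)(x)`.
-/

open scoped ComplexConjugate ENNReal InnerProductSpace
open Finset

namespace lp

variable {ι : Type*}

theorem dense_setOf_support_finite {E : Type*} [NormedAddCommGroup E] {p : ℝ≥0∞} [Fact (1 ≤ p)]
    (hp : p ≠ ∞) : Dense {f : lp (fun _ : ι => E) p | (Function.support f).Finite} := by
  classical
  intro f
  refine mem_closure_of_tendsto (lp.hasSum_single hp f) (Filter.Eventually.of_forall fun s => ?_)
  refine s.finite_toSet.subset fun j hj => ?_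
  by_contra hjs
  refine hj ?_
  simp only [lp.coeFn_sum, Finset.sum_apply]
  exact sum_eq_zero fun i hi => lp.single_apply_ne p i _ fun h => hjs (h ▸ hi)

variable {𝕜 : Type*} [RCLike 𝕜]

theorem apply_eq_inner_single_one [DecidableEq ι] (f : lp (fun _ : ι => 𝕜) 2) (i : ι) :
    f i = ⟪lp.single 2 i (1 : 𝕜), f⟫_𝕜 := by
  simp [lp.inner_single_left, RCLike.inner_apply]

theorem inner_eq_sum_of_notMem (f g : lp (fun _ : ι => 𝕜) 2) {s : Finset ι}
    (hf : ∀ i ∉ s, f i = 0) : ⟪f, g⟫_𝕜 = ∑ i ∈ s, conj (f i) * g i := by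
  rw [← (lp.hasSum_inner f g).tsum_eq, tsum_eq_sum fun i hi => by simp [hf i hi]]
  exact sum_congr rfl fun i _ => by rw [RCLike.inner_apply, mul_comm]

theorem adjoint_apply_eq_inner_single [DecidableEq ι] {F : Type*} [NormedAddCommGroup F]
    [InnerProductSpace 𝕜 F]
    (T : lp (fun _ : ι => 𝕜) 2 →ₗ.[𝕜] F) (hT : Dense (T.domain : Set (lp (fun _ : ι => 𝕜) 2)))
    {i : ι} (hi : lp.single 2 i (1 : 𝕜) ∈ T.domain) (v : T.adjoint.domain) :
    (T.adjoint v : lp (fun _ : ι => 𝕜) 2) i = ⟪T ⟨_, hi⟩, v⟫_𝕜 := by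
  rw [apply_eq_inner_single_one, (T.adjoint_isFormalAdjoint hT).symm ⟨_, hi⟩ v]

end lp

namespace SimpleGraph

variable {V : Type*} (G : SimpleGraph V) [G.LocallyFinite] (c : V → V → ℝ)

def weightedLaplacian (u : V → ℂ) (x : V) : ℂ :=
  ∑ y ∈ G.neighborFinset x, (c x y : ℂ) * (u x - u y)

variable [DecidableEq V] {G} {x y : V}

theorem weightedLaplacian_single_self :
    G.weightedLaplacian c (Pi.single x (1 : ℂ)) x = ∑ y ∈ G.neighborFinset x, (c x y : ℂ) := by
  refine sum_congr rfl fun y hy => ?_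
  rw [Pi.single_eq_same, Pi.single_eq_of_ne ((G.mem_neighborFinset x y).1 hy).ne', sub_zero,
    mul_one]

theorem weightedLaplacian_single_of_adj (h : G.Adj x y) :
    G.weightedLaplacian c (Pi.single x (1 : ℂ)) y = -(c y x : ℂ) := by
  have hyx : (Pi.single x 1 : V → ℂ) y = 0 := Pi.single_eq_of_ne h.ne' _
  rw [weightedLaplacian, sum_eq_single_of_mem x ((G.mem_neighborFinset y x).2 h.symm)]
  · rw [hyx, Pi.single_eq_same]
    ring
  · intro z _ hzx
    rw [hyx, Pi.single_eq_of_ne hzx, sub_zero, mul_zero]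

theorem weightedLaplacian_single_of_ne_of_not_adj (hne : y ≠ x) (h : ¬G.Adj x y) :
    G.weightedLaplacian c (Pi.single x (1 : ℂ)) y = 0 := by
  refine sum_eq_zero fun z hz => ?_
  have hzx : z ≠ x := by
    rintro rfl
    exact h ((G.mem_neighborFinset y z).1 hz).symm
  rw [Pi.single_eq_of_ne hne, Pi.single_eq_of_ne hzx, sub_zero, mul_zero]

theorem weightedLaplacian_eq_sum_conj_weightedLaplacian_single (hsymm : ∀ x y, c x y = c y x)
    (v : V → ℂ) (x : V) :
    G.weightedLaplacian c v x = ∑ y ∈ insert x (G.neighborFinset x),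
      conj (G.weightedLaplacian c (Pi.single x (1 : ℂ)) y) * v y := by
  have hneighbor : ∀ y ∈ G.neighborFinset x,
      conj (G.weightedLaplacian c (Pi.single x (1 : ℂ)) y) * v y = -((c x y : ℂ) * v y) :=
    fun y hy => by
    rw [weightedLaplacian_single_of_adj c ((G.mem_neighborFinset x y).1 hy), map_neg,
      Complex.conj_ofReal, hsymm y x, neg_mul]
  rw [sum_insert (G.notMem_neighborFinset_self x), sum_congr rfl hneighbor,
    weightedLaplacian_single_self, map_sum]
  simp only [weightedLaplacian, Complex.conj_ofReal, mul_sub, sum_sub_distrib, sum_mul,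
    sum_neg_distrib]
  ring

end SimpleGraph

theorem graphLaplacian_adjoint_apply_general {V : Type*} (G : SimpleGraph V)
    [G.LocallyFinite] (c : V → V → ℝ)
    (hsymm : ∀ x y, c x y = c y x)
    (T : lp (fun _ : V => ℂ) 2 →ₗ.[ℂ] lp (fun _ : V => ℂ) 2)
    (hdom : ∀ f : lp (fun _ : V => ℂ) 2, f ∈ T.domain ↔ (Function.support (⇑f)).Finite)
    (haction : ∀ u : T.domain, ∀ x : V,
      (T u : lp (fun _ : V => ℂ) 2) x
        = ∑ y ∈ G.neighborFinset x, (c x y : ℂ) * ((u : lp (fun _ : V => ℂ) 2) x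
            - (u : lp (fun _ : V => ℂ) 2) y)) :
    ∀ v : T.adjoint.domain, ∀ x : V,
      (T.adjoint v : lp (fun _ : V => ℂ) 2) x
        = ∑ y ∈ G.neighborFinset x, (c x y : ℂ) * ((v : lp (fun _ : V => ℂ) 2) x
            - (v : lp (fun _ : V => ℂ) 2) y) := by
  classical
  have hT : Dense (T.domain : Set (lp (fun _ : V => ℂ) 2)) :=
    (lp.dense_setOf_support_finite (p := 2) ENNReal.ofNat_ne_top).mono fun f hf => (hdom f).2 hf
  intro v x
  have hx : lp.single 2 x (1 : ℂ) ∈ T.domain :=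
    (hdom _).2 ((Set.finite_singleton x).subset Pi.support_single_subset)
  have hTx : ∀ y,
      (T ⟨_, hx⟩ : lp (fun _ : V => ℂ) 2) y = G.weightedLaplacian c (Pi.single x (1 : ℂ)) y :=
    haction _
  rw [lp.adjoint_apply_eq_inner_single T hT hx v, lp.inner_eq_sum_of_notMem _ _ fun y hy => ?_]
  · simp only [hTx]
    exact (G.weightedLaplacian_eq_sum_conj_weightedLaplacian_single c hsymm v x).symm
  · rw [mem_insert, not_or, G.mem_neighborFinset] at hy
    rw [hTx, SimpleGraph.weightedLaplacian_single_of_ne_of_not_adj c hy.1 hy.2]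

/-- The adjoint of the graph Laplacian (as a densely defined operator on `ℓ²(V)` with domain
the finitely supported functions) acts by the same difference expression. -/
theorem graphLaplacian_adjoint_apply {V : Type*} (G : SimpleGraph V) [DecidableRel G.Adj]
    [G.LocallyFinite] (c : V → V → ℝ)
    (hsymm : ∀ x y, c x y = c y x)
    (hpos : ∀ x y, G.Adj x y → 0 < c x y)
    (hzero : ∀ x y, ¬ G.Adj x y → c x y = 0)
    (T : lp (fun _ : V => ℂ) 2 →ₗ.[ℂ] lp (fun _ : V => ℂ) 2)
    (hdom : ∀ f : lp (fun _ : V => ℂ) 2, f ∈ T.domain ↔ (Function.support (⇑f)).Finite)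
    (haction : ∀ u : T.domain, ∀ x : V,
      (T u : lp (fun _ : V => ℂ) 2) x
        = ∑ y ∈ G.neighborFinset x, (c x y : ℂ) * ((u : lp (fun _ : V => ℂ) 2) x
            - (u : lp (fun _ : V => ℂ) 2) y)) :
    ∀ v : T.adjoint.domain, ∀ x : V,
      (T.adjoint v : lp (fun _ : V => ℂ) 2) x
        = ∑ y ∈ G.neighborFinset x, (c x y : ℂ) * ((v : lp (fun _ : V => ℂ) 2) x
            - (v : lp (fun _ : V => ℂ) 2) y) :=
  graphLaplacian_adjoint_apply_general G c hsymm T hdom haction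
end

section
/- Let G be a connected locally finite simple graph on an infinite vertex set V with conductance function c. If v : V → ℂ is square-summable (Σ_{x ∈ V} |v(x)|² < ∞) and satisfies the pointwise eigenvalue equation Σ_{y adjacent to x} c x y · (v(x) − v(y)) = −v(x) for every x ∈ V, then v = 0. -/
open scoped BigOperators

/-- On a connected locally finite simple graph with infinite vertex set, the equation
`Δ_c v = -v` has no nonzero square-summable solutions. -/
theorem graphLaplacian_no_defect_vector {V : Type*} [Infinite V]
    (G : SimpleGraph V) [DecidableRel G.Adj] [G.LocallyFinite]
    (hconn : G.Connected) (c : V → V → ℝ)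
    (hsymm : ∀ x y, c x y = c y x)
    (hpos : ∀ x y, G.Adj x y → 0 < c x y)
    (hzero : ∀ x y, ¬ G.Adj x y → c x y = 0)
    (v : V → ℂ)
    (hsq : Summable fun x => ‖v x‖ ^ 2)
    (heig : ∀ x, ∑ y ∈ G.neighborFinset x, (c x y : ℂ) * (v x - v y) = -v x) :
    v = 0 := by
  by_contra hv
  obtain ⟨x₀, hx₀⟩ : ∃ x, v x ≠ 0 := by
    by_contra h; push_neg at h; exact hv (funext fun x => h x)
  have hε : (0:ℝ) < ‖v x₀‖ ^ 2 := pow_pos (norm_pos_iff.mpr hx₀) 2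
  have hlt : ∀ᶠ x in Filter.cofinite, ‖v x‖ ^ 2 < ‖v x₀‖ ^ 2 :=
    hsq.tendsto_cofinite_zero.eventually (eventually_lt_nhds hε)
  have hfin : {x | ¬ ‖v x‖ ^ 2 < ‖v x₀‖ ^ 2}.Finite := hlt
  set A : Finset V := hfin.toFinset with hA
  have hx₀A : x₀ ∈ A := by simp [hA, Set.Finite.mem_toFinset]
  obtain ⟨m, hmA, hm⟩ := A.exists_max_image (fun x => ‖v x‖) ⟨x₀, hx₀A⟩
  have hmax : ∀ y, ‖v y‖ ≤ ‖v m‖ := by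
    intro y
    by_cases hy : y ∈ A
    · exact hm y hy
    · have : ‖v y‖ ^ 2 < ‖v x₀‖ ^ 2 := by
        simpa [hA, Set.Finite.mem_toFinset] using hy
      have h2 : ‖v x₀‖ ≤ ‖v m‖ := hm x₀ hx₀A
      nlinarith [norm_nonneg (v y), norm_nonneg (v x₀)]
  have hvm : 0 < ‖v m‖ := lt_of_lt_of_le (norm_pos_iff.mpr hx₀) (hm x₀ hx₀A)
  set N := G.neighborFinset m
  set S : ℝ := ∑ y ∈ N, c m y with hS
  have hcnn : ∀ y ∈ N, 0 ≤ c m y := fun y hy =>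
    (hpos m y ((SimpleGraph.mem_neighborFinset G m y).mp hy)).le
  have hS0 : 0 ≤ S := Finset.sum_nonneg hcnn
  have key : ((S : ℂ) + 1) * v m = ∑ y ∈ N, (c m y : ℂ) * v y := by
    have h := heig m
    have : ∑ y ∈ N, ((c m y : ℂ) * v m - (c m y : ℂ) * v y) = -v m := by
      simpa [mul_sub] using h
    rw [Finset.sum_sub_distrib, ← Finset.sum_mul] at this
    push_cast [hS]
    linear_combination this
  have hnorm : (S + 1) * ‖v m‖ ≤ S * ‖v m‖ := by
    have h1 : ‖((S : ℂ) + 1) * v m‖ = (S + 1) * ‖v m‖ := by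
      rw [norm_mul]
      congr 1
      have : ((S : ℂ) + 1) = ((S + 1 : ℝ) : ℂ) := by push_cast; ring
      rw [this, Complex.norm_real, Real.norm_eq_abs, abs_of_nonneg (by linarith)]
    calc (S + 1) * ‖v m‖ = ‖∑ y ∈ N, (c m y : ℂ) * v y‖ := by rw [← h1, key]
      _ ≤ ∑ y ∈ N, ‖(c m y : ℂ) * v y‖ := norm_sum_le _ _
      _ ≤ ∑ y ∈ N, c m y * ‖v m‖ := by
          refine Finset.sum_le_sum fun y hy => ?_
          rw [norm_mul, Complex.norm_real, Real.norm_eq_abs, abs_of_nonneg (hcnn y hy)]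
          exact mul_le_mul_of_nonneg_left (hmax y) (hcnn y hy)
      _ = S * ‖v m‖ := by rw [← Finset.sum_mul]
  nlinarith
end

section
/- Let H be a complex Hilbert space and T a densely defined linear operator (LinearPMap) on H such that (i) T is symmetric, i.e. ⟨T u, v⟩ = ⟨u, T v⟩ for all u, v in the domain of T; (ii) T is positive, i.e. the real part of ⟨u, T u⟩ is ≥ 0 for all u in the domain of T; and (iii) the only vector v in the domain of the adjoint T* with T* v = −v is v = 0. Then T is essentially selfadjoint: the closure of T is a selfadjoint operator, i.e. the adjoint of T equals the closure of T. -/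
/-!
Let `S` be the closure of `T`. Symmetry gives `T ≤ T*`, and `T*` is closed, so `T` is closable
and `S ≤ T*`. Positivity gives `‖(u, T u)‖ ≤ ‖u + T u‖` on the graph of `T`, hence on its closure,
the graph of `S`; so `1 + S` has closed range. That range contains the range of `1 + T`, whose
orthogonal complement is the kernel of `1 + T*`, which is trivial. Hence `1 + S` is onto, and
since `1 + T*` is injective and extends `1 + S`, the two operators coincide.
-/

open RCLike NNReal

theorem Submodule.isClosed_map_of_norm_le_mul {𝕜 E F : Type*} [NontriviallyNormedField 𝕜]
    [NormedAddCommGroup E] [NormedSpace 𝕜 E] [CompleteSpace E] [NormedAddCommGroup F]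
    [NormedSpace 𝕜 F] {K : Submodule 𝕜 E} (hK : IsClosed (K : Set E)) (f : E →L[𝕜] F) {c : ℝ≥0}
    (hf : ∀ x ∈ K, ‖x‖ ≤ c * ‖f x‖) : IsClosed (K.map (f : E →ₗ[𝕜] F) : Set F) := by
  have := hK.completeSpace_coe
  have hanti : AntilipschitzWith c (f ∘L K.subtypeL) :=
    (f ∘L K.subtypeL).antilipschitz_of_bound fun x => hf x x.2
  convert hanti.isClosed_range (f ∘L K.subtypeL).uniformContinuous using 1
  ext y
  simp

namespace LinearPMap

theorem closure_le_of_le_of_isClosed {R E F : Type*} [CommRing R] [TopologicalSpace R]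
    [AddCommGroup E] [Module R E] [TopologicalSpace E] [ContinuousAdd E] [ContinuousSMul R E]
    [AddCommGroup F] [Module R F] [TopologicalSpace F] [ContinuousAdd F] [ContinuousSMul R F]
    {f g : E →ₗ.[R] F} (hg : g.IsClosed) (h : f ≤ g) : f.closure ≤ g := by
  refine le_of_le_graph ?_
  rw [← (hg.isClosable.leIsClosable h).graph_closure_eq_closure_graph]
  exact Submodule.topologicalClosure_minimal _ (le_graph_of_le h) hg

theorem eq_of_le_of_surjective_id_add {R E : Type*} [Ring R] [AddCommGroup E] [Module R E]
    {S A : E →ₗ.[R] E} (hle : S ≤ A) (hsurj : ∀ y, ∃ u : S.domain, (u : E) + S u = y)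
    (hinj : ∀ v : A.domain, A v = -(v : E) → (v : E) = 0) : S = A := by
  refine eq_of_le_of_domain_eq hle (le_antisymm hle.1 fun v hv => ?_)
  obtain ⟨u, hu⟩ := hsurj (v + A ⟨v, hv⟩)
  have hAu : A ⟨u, hle.1 u.2⟩ = v + A ⟨v, hv⟩ - u := (hle.2 rfl).symm.trans (eq_sub_of_add_eq' hu)
  have hvu : (v : E) - u = 0 :=
    hinj (⟨v, hv⟩ - ⟨u, hle.1 u.2⟩) (by rw [map_sub, hAu, Submodule.coe_sub]; abel)
  rw [sub_eq_zero.1 hvu]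
  exact u.2

end LinearPMap

section InnerProductSpace

variable {𝕜 E : Type*} [RCLike 𝕜] [NormedAddCommGroup E] [InnerProductSpace 𝕜 E]

local notation "⟪" x ", " y "⟫" => inner 𝕜 x y

theorem norm_prod_le_norm_add_of_re_inner_nonneg {x y : E} (h : 0 ≤ re ⟪x, y⟫) :
    ‖(x, y)‖ ≤ ‖x + y‖ := by
  have hsq : ‖x‖ ^ 2 + ‖y‖ ^ 2 ≤ ‖x + y‖ ^ 2 := by
    rw [norm_add_sq (𝕜 := 𝕜)]
    linarith
  refine norm_prod_le_iff.2 ⟨?_, ?_⟩ <;>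
    refine (pow_le_pow_iff_left₀ (norm_nonneg _) (norm_nonneg _) two_ne_zero).1 ?_ <;>
    nlinarith [sq_nonneg ‖x‖, sq_nonneg ‖y‖]

namespace LinearPMap

variable {T : E →ₗ.[𝕜] E}

theorem norm_le_norm_fst_add_snd_of_mem_closure_graph
    (hpos : ∀ u : T.domain, 0 ≤ re ⟪(u : E), T u⟫) {p : E × E}
    (hp : p ∈ T.graph.topologicalClosure) : ‖p‖ ≤ ‖p.1 + p.2‖ := by
  refine closure_minimal (fun q hq => ?_)
    (isClosed_le continuous_norm (continuous_fst.add continuous_snd).norm) hp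
  obtain ⟨u, rfl, rfl⟩ := T.mem_graph_iff'.1 hq
  exact norm_prod_le_norm_add_of_re_inner_nonneg (hpos u)

theorem isClosed_map_closure_graph_fst_add_snd [CompleteSpace E] (hc : T.IsClosable)
    (hpos : ∀ u : T.domain, 0 ≤ re ⟪(u : E), T u⟫) :
    _root_.IsClosed (T.closure.graph.map (LinearMap.fst 𝕜 E E + LinearMap.snd 𝕜 E E) : Set E) := by
  rw [← hc.graph_closure_eq_closure_graph]
  exact Submodule.isClosed_map_of_norm_le_mul (c := 1) T.graph.isClosed_topologicalClosure
    (ContinuousLinearMap.fst 𝕜 E E + ContinuousLinearMap.snd 𝕜 E E)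
    fun p hp => by simpa using norm_le_norm_fst_add_snd_of_mem_closure_graph hpos hp

variable [CompleteSpace E]

theorem adjoint_apply_eq_neg_of_inner_add_eq_zero (hT : Dense (T.domain : Set E)) {w : E}
    (hw : ∀ x : T.domain, ⟪(x : E) + T x, w⟫ = 0) :
    ∃ v : T.adjoint.domain, (v : E) = w ∧ T.adjoint v = -w := by
  have hw' : ∀ x : T.domain, ⟪-w, (x : E)⟫ = ⟪w, T x⟫ := fun x => by
    have hx := hw x
    rw [inner_add_left] at hx
    rw [inner_neg_left, ← inner_conj_symm, ← inner_conj_symm w, eq_neg_of_add_eq_zero_left hx,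
      (starRingEnd 𝕜).map_neg, neg_neg]
  exact ⟨⟨w, mem_adjoint_domain_of_exists w ⟨-w, hw'⟩⟩, rfl, adjoint_apply_eq hT _ hw'⟩

theorem orthogonal_map_graph_fst_add_snd_eq_bot (hT : Dense (T.domain : Set E))
    (hdefect : ∀ v : T.adjoint.domain, T.adjoint v = -(v : E) → (v : E) = 0) :
    (T.graph.map (LinearMap.fst 𝕜 E E + LinearMap.snd 𝕜 E E))ᗮ = ⊥ := by
  refine (Submodule.eq_bot_iff _).2 fun w hw => ?_
  obtain ⟨v, rfl, hv⟩ := adjoint_apply_eq_neg_of_inner_add_eq_zero hT (w := w) fun x =>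
    (Submodule.mem_orthogonal _ _).1 hw _ ⟨_, T.mem_graph x, rfl⟩
  exact hdefect v hv

theorem closure_id_add_surjective (hT : Dense (T.domain : Set E)) (hc : T.IsClosable)
    (hpos : ∀ u : T.domain, 0 ≤ re ⟪(u : E), T u⟫)
    (hdefect : ∀ v : T.adjoint.domain, T.adjoint v = -(v : E) → (v : E) = 0) (y : E) :
    ∃ u : T.closure.domain, (u : E) + T.closure u = y := by
  set φ := LinearMap.fst 𝕜 E E + LinearMap.snd 𝕜 E E
  have hdense : (T.graph.map φ).topologicalClosure = ⊤ :=
    Submodule.topologicalClosure_eq_top_iff.2 (orthogonal_map_graph_fst_add_snd_eq_bot hT hdefect)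
  have htop : T.closure.graph.map φ = ⊤ := eq_top_iff.2 <| hdense ▸
    Submodule.topologicalClosure_minimal _ (Submodule.map_mono (le_graph_of_le T.le_closure))
      (isClosed_map_closure_graph_fst_add_snd hc hpos)
  obtain ⟨p, hp, rfl⟩ : y ∈ T.closure.graph.map φ := htop ▸ Submodule.mem_top
  obtain ⟨u, rfl, rfl⟩ := T.closure.mem_graph_iff'.1 hp
  exact ⟨u, rfl⟩

end LinearPMap

end InnerProductSpace

/-- A densely defined, symmetric, positive operator `T` on a complex Hilbert space whose
adjoint has no `-1` eigenvector is essentially selfadjoint: `T.adjoint = T.closure`. -/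
theorem essentially_selfadjoint_of_positive_of_no_defect
    {H : Type*} [NormedAddCommGroup H] [InnerProductSpace ℂ H] [CompleteSpace H]
    (T : H →ₗ.[ℂ] H) (hdense : Dense (T.domain : Set H))
    (hsymm : ∀ u v : T.domain,
      (inner ℂ (T u) (v : H) : ℂ) = inner ℂ (u : H) (T v))
    (hpos : ∀ u : T.domain, 0 ≤ (inner ℂ (u : H) (T u) : ℂ).re)
    (hdefect : ∀ v : T.adjoint.domain, T.adjoint v = -(v : H) → (v : H) = 0) :
    T.adjoint = T.closure := by
  have hle : T ≤ T.adjoint := LinearPMap.IsFormalAdjoint.le_adjoint hdense hsymm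
  have hclosed : T.adjoint.IsClosed := LinearPMap.adjoint_isClosed hdense
  have hsurj := LinearPMap.closure_id_add_surjective hdense
    (hclosed.isClosable.leIsClosable hle) hpos hdefect
  exact (LinearPMap.eq_of_le_of_surjective_id_add
    (LinearPMap.closure_le_of_le_of_isClosed hclosed hle) hsurj hdefect).symm
end

section
/- (Main Theorem) Let G be a connected locally finite simple graph on a countably infinite vertex set V, and let c be any conductance function on G. Then the graph Laplacian Δ_c, defined on the dense subspace of finitely supported functions in the Hilbert space ℓ²(V), is essentially selfadjoint: the adjoint of Δ_c equals the closure of Δ_c, so the closure of Δ_c is a selfadjoint operator in ℓ²(V). -/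
/-!
Green's formula `2 ⟪u, Δ u⟫ = ∑ₓ ∑_{y ∼ x} c x y ‖u x - u y‖²` for finitely supported `u`
shows that `Δ` is symmetric and nonnegative on its domain. Hence `‖u‖ ≤ ‖Δ u + u‖`, so the
closure of `Δ + 1` has closed range, and that range is dense as soon as `Δ* + 1` is injective;
every `u ∈ dom Δ*` is then the preimage of `Δ* u + u` under the closure of `Δ + 1`, i.e.
`Δ* = closure Δ`. Testing against point masses shows that `Δ*` acts on `ℓ²` by the same formula
as `Δ`. If `Δ w = -w` with `w ∈ ℓ²`, then `‖w‖` attains its maximum at some vertex `x` because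
`w` vanishes at infinity, and there `re (conj (w x) * Δ w x)` is both `≥ 0` and `= -‖w x‖²`,
so `w = 0`.
-/

open Function Filter Topology RCLike
open scoped ComplexConjugate ENNReal lp

namespace LinearPMap

section Closure

variable {R E F : Type*} [CommRing R] [TopologicalSpace R] [AddCommGroup E] [AddCommGroup F]
  [Module R E] [Module R F] [TopologicalSpace E] [TopologicalSpace F] [ContinuousAdd E]
  [ContinuousAdd F] [ContinuousSMul R E] [ContinuousSMul R F]

theorem IsClosed.closure_eq {T : E →ₗ.[R] F} (hT : T.IsClosed) : T.closure = T :=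
  eq_of_eq_graph (hT.isClosable.graph_closure_eq_closure_graph.symm.trans
    hT.submodule_topologicalClosure_eq)

end Closure

variable {𝕜 E : Type*} [RCLike 𝕜] [NormedAddCommGroup E] [InnerProductSpace 𝕜 E]
  {T : E →ₗ.[𝕜] E}

local notation "⟪" x ", " y "⟫" => inner 𝕜 x y

theorem IsFormalAdjoint.closure_le_adjoint [CompleteSpace E] (hT : Dense (T.domain : Set E))
    (h : T.IsFormalAdjoint T) : T.closure ≤ T.adjoint := by
  have hclosed := adjoint_isClosed hT
  simpa only [hclosed.closure_eq] using hclosed.isClosable.closure_mono (h.le_adjoint hT)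

theorem norm_le_norm_apply_add (hpos : ∀ u : T.domain, 0 ≤ re ⟪(u : E), T u⟫) (u : T.domain) :
    ‖(u : E)‖ ≤ ‖T u + u‖ := by
  have h : ‖(u : E)‖ * ‖(u : E)‖ ≤ ‖(u : E)‖ * ‖T u + u‖ :=
    calc ‖(u : E)‖ * ‖(u : E)‖ = re ⟪(u : E), u⟫ := by rw [inner_self_eq_norm_mul_norm]
      _ ≤ re ⟪(u : E), T u + u⟫ := by
        rw [inner_add_right, _root_.map_add]; linarith [hpos u]
      _ ≤ ‖⟪(u : E), T u + u⟫‖ := re_le_norm _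
      _ ≤ ‖(u : E)‖ * ‖T u + u‖ := norm_inner_le_norm _ _
  rcases (norm_nonneg (u : E)).eq_or_lt with hu | hu
  · rw [← hu]; exact norm_nonneg _
  · exact le_of_mul_le_mul_left h hu

theorem topologicalClosure_range_apply_add_eq_top [CompleteSpace E]
    (hT : Dense (T.domain : Set E))
    (hker : ∀ v : T.adjoint.domain, T.adjoint v = -v → (v : E) = 0) :
    (LinearMap.range (T.toFun + T.domain.subtype)).topologicalClosure = ⊤ := by
  rw [Submodule.topologicalClosure_eq_top_iff, Submodule.eq_bot_iff]
  intro z hz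
  have hz' : ∀ u : T.domain, ⟪-z, u⟫ = ⟪z, T u⟫ := fun u => by
    have h0 : ⟪z, T u + u⟫ = 0 :=
      inner_eq_zero_symm.1 ((Submodule.mem_orthogonal _ z).1 hz _ ⟨u, rfl⟩)
    rw [inner_add_right] at h0
    rw [inner_neg_left, eq_comm, ← add_eq_zero_iff_eq_neg, h0]
  have hmem : z ∈ T.adjoint.domain := mem_adjoint_domain_of_exists _ ⟨-z, hz'⟩
  exact hker ⟨z, hmem⟩ (adjoint_apply_eq hT _ hz')

theorem IsClosable.exists_closure_apply_add_eq [CompleteSpace E] (hc : T.IsClosable)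
    (hb : ∀ u : T.domain, ‖(u : E)‖ ≤ ‖T u + u‖) {z : E}
    (hz : z ∈ (LinearMap.range (T.toFun + T.domain.subtype)).topologicalClosure) :
    ∃ v : T.closure.domain, T.closure v + v = z := by
  rw [← SetLike.mem_coe, Submodule.topologicalClosure_coe] at hz
  obtain ⟨w, hw_mem, hw_lim⟩ := mem_closure_iff_seq_limit.1 hz
  choose u hu using hw_mem
  have hu' : ∀ n, T (u n) + u n = w n := hu
  have hcauchy : CauchySeq fun n => (u n : E) := by
    refine Metric.cauchySeq_iff.2 fun ε hε => ?_
    obtain ⟨N, hN⟩ := Metric.cauchySeq_iff.1 hw_lim.cauchySeq ε hε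
    refine ⟨N, fun m hm n hn => lt_of_le_of_lt ?_ (hN m hm n hn)⟩
    have := hb (u m - u n)
    rwa [map_sub, Submodule.coe_sub, sub_add_sub_comm, hu', hu', ← dist_eq_norm,
      ← dist_eq_norm] at this
  obtain ⟨v, hv⟩ := cauchySeq_tendsto_of_complete hcauchy
  have hTu : Tendsto (fun n => T (u n)) atTop (𝓝 (z - v)) := by
    simpa only [← hu', add_sub_cancel_right] using hw_lim.sub hv
  have hgraph : (v, z - v) ∈ T.closure.graph := by
    rw [← hc.graph_closure_eq_closure_graph, ← SetLike.mem_coe, Submodule.topologicalClosure_coe]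
    exact mem_closure_of_tendsto (hv.prodMk_nhds hTu) (.of_forall fun n => T.mem_graph _)
  obtain ⟨y, rfl, hy⟩ := (mem_graph_iff _).1 hgraph
  exact ⟨y, by rw [hy, sub_add_cancel]⟩

theorem adjoint_eq_closure_of_re_inner_nonneg [CompleteSpace E] (hT : Dense (T.domain : Set E))
    (hsymm : T.IsFormalAdjoint T) (hpos : ∀ u : T.domain, 0 ≤ re ⟪(u : E), T u⟫)
    (hker : ∀ v : T.adjoint.domain, T.adjoint v = -v → (v : E) = 0) :
    T.adjoint = T.closure := by
  have hle := hsymm.closure_le_adjoint hT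
  have hclosable : T.IsClosable := isClosable_iff_exists_closed_extension.2
    ⟨T.adjoint, adjoint_isClosed hT, hsymm.le_adjoint hT⟩
  refine le_antisymm (le_of_le_graph fun ⟨_, _⟩ hp => ?_) hle
  obtain ⟨u, rfl, rfl⟩ := (mem_graph_iff _).1 hp
  obtain ⟨v, hv⟩ := hclosable.exists_closure_apply_add_eq (norm_le_norm_apply_add hpos)
    (z := T.adjoint u + u) (by rw [topologicalClosure_range_apply_add_eq_top hT hker]; trivial)
  set v' : T.adjoint.domain := ⟨v, hle.1 v.2⟩
  have hv' : T.adjoint v' = T.closure v := (hle.2 rfl).symm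
  have huv : (u : E) = v := by
    refine sub_eq_zero.1 (hker (u - v') ?_)
    rw [map_sub, hv', eq_sub_of_add_eq hv, Submodule.coe_sub]
    abel
  exact (mem_graph_iff _).2 ⟨v, huv.symm, by rw [← hv', show v' = u from Subtype.ext huv.symm]⟩

end LinearPMap

theorem exists_forall_norm_le_of_tendsto_zero {ι E : Type*} [Nonempty ι]
    [SeminormedAddCommGroup E] {f : ι → E} (hf : Tendsto (fun i => ‖f i‖) cofinite (𝓝 0)) :
    ∃ x, ∀ y, ‖f y‖ ≤ ‖f x‖ := by
  by_cases! h : ∀ y, ‖f y‖ ≤ 0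
  · exact ⟨Classical.arbitrary ι, fun y => (h y).trans (norm_nonneg _)⟩
  obtain ⟨x₀, hx₀⟩ := h
  have hfin : {x | ‖f x₀‖ ≤ ‖f x‖}.Finite := by
    simpa only [not_lt] using eventually_cofinite.1 (hf.eventually (gt_mem_nhds hx₀))
  obtain ⟨x, hx, hmax⟩ :=
    Set.exists_max_image _ (fun i => ‖f i‖) hfin ⟨x₀, show ‖f x₀‖ ≤ ‖f x₀‖ from le_rfl⟩
  exact ⟨x, fun y => (le_total ‖f x₀‖ ‖f y‖).elim (hmax y) fun hy => hy.trans hx⟩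

namespace lp

variable {ι : Type*}

theorem inner_eq_tsum_conj_mul {𝕜 : Type*} [RCLike 𝕜] (f g : ℓ²(ι, 𝕜)) :
    inner 𝕜 f g = ∑' i, conj (f i) * g i := by
  simp only [lp.inner_eq_tsum, RCLike.inner_apply']

variable {E : ι → Type*} [∀ i, NormedAddCommGroup (E i)] {p : ℝ≥0∞}

theorem tendsto_norm_cofinite_zero (hp : 0 < p.toReal) (f : lp E p) :
    Tendsto (fun i => ‖f i‖) cofinite (𝓝 0) := by
  have h := ((lp.memℓp f).summable hp).tendsto_cofinite_zero.rpow_const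
    (p := p.toReal⁻¹) (Or.inr (inv_nonneg.2 hp.le))
  simpa only [← Real.rpow_mul (norm_nonneg _), mul_inv_cancel₀ hp.ne', Real.rpow_one,
    Real.zero_rpow (inv_ne_zero hp.ne')] using h

theorem dense_setOf_finite_support [Fact (1 ≤ p)] (hp : p ≠ ⊤) :
    Dense {f : lp E p | {i | f i ≠ 0}.Finite} := by
  classical
  refine fun f => mem_closure_of_tendsto (lp.hasSum_single hp f) (Eventually.of_forall fun s => ?_)
  refine s.finite_toSet.subset fun i hi => ?_
  by_contra his
  refine hi ?_
  rw [lp.coeFn_sum, Finset.sum_apply]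
  exact Finset.sum_eq_zero fun j hj => lp.single_apply_ne p j _ fun hij => his (hij ▸ hj)

end lp

namespace SimpleGraph

variable {V : Type*} (G : SimpleGraph V) [G.LocallyFinite] (c : V → V → ℝ)

noncomputable def laplacian (f : V → ℂ) (x : V) : ℂ :=
  ∑ y ∈ G.neighborFinset x, (c x y : ℂ) * (f x - f y)

theorem laplacian_conj (f : V → ℂ) (x : V) :
    G.laplacian c (fun y => conj (f y)) x = conj (G.laplacian c f x) := by
  simp only [laplacian, map_sum, map_mul, map_sub, Complex.conj_ofReal]

theorem sum_sum_neighborFinset_comm {M : Type*} [AddCommMonoid M] (S : Finset V)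
    (Φ : V → V → M) (hΦ : ∀ x ∈ S, ∀ y ∈ G.neighborFinset x, y ∉ S → Φ x y = 0 ∧ Φ y x = 0) :
    ∑ x ∈ S, ∑ y ∈ G.neighborFinset x, Φ x y = ∑ x ∈ S, ∑ y ∈ G.neighborFinset x, Φ y x := by
  classical
  have hrestrict : ∀ x ∈ S, ∀ ψ : V → M, (∀ y ∈ G.neighborFinset x, y ∉ S → ψ y = 0) →
      ∑ y ∈ G.neighborFinset x, ψ y = ∑ y ∈ S, if G.Adj x y then ψ y else 0 := by
    intro x _ ψ hψ
    rw [← Finset.sum_filter]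
    refine (Finset.sum_subset (fun y hy => ?_) fun y hy hyS => hψ y hy fun h => hyS ?_).symm
    · exact (G.mem_neighborFinset _ _).2 (Finset.mem_filter.1 hy).2
    · exact Finset.mem_filter.2 ⟨h, (G.mem_neighborFinset _ _).1 hy⟩
  rw [Finset.sum_congr rfl fun x hx => hrestrict x hx (Φ x) fun y hy hyS => (hΦ x hx y hy hyS).1,
    Finset.sum_congr rfl fun x hx => hrestrict x hx (Φ · x) fun y hy hyS => (hΦ x hx y hy hyS).2,
    Finset.sum_comm]
  simp only [G.adj_comm]

theorem exists_finset_neighborhood_support {M : Type*} [Zero M] {g : V → M}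
    (hg : (Function.support g).Finite) :
    ∃ S : Finset V, (∀ x ∉ S, g x = 0) ∧ ∀ x y, G.Adj x y → y ∉ S → g x = 0 := by
  classical
  refine ⟨hg.toFinset ∪ hg.toFinset.biUnion fun x => G.neighborFinset x, fun x hx => ?_,
    fun x y hxy hy => ?_⟩
  · by_contra h
    exact hx (Finset.mem_union_left _ (hg.mem_toFinset.2 h))
  · by_contra h
    exact hy (Finset.mem_union_right _
      (Finset.mem_biUnion.2 ⟨x, hg.mem_toFinset.2 h, (G.mem_neighborFinset _ _).2 hxy⟩))

theorem tsum_mul_laplacian_comm (hsymm : ∀ x y, c x y = c y x) (f : V → ℂ) {g : V → ℂ}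
    (hg : (Function.support g).Finite) :
    ∑' x, f x * G.laplacian c g x = ∑' x, G.laplacian c f x * g x := by
  obtain ⟨S, hS, hSbdry⟩ := G.exists_finset_neighborhood_support hg
  have hΔg : ∀ x ∉ S, G.laplacian c g x = 0 := fun x hx => Finset.sum_eq_zero fun y hy => by
    rw [hS x hx, hSbdry y x ((G.mem_neighborFinset _ _).1 hy).symm hx, sub_zero, mul_zero]
  rw [tsum_eq_sum (s := S) fun x hx => by rw [hΔg x hx, mul_zero],
    tsum_eq_sum (s := S) fun x hx => by rw [hS x hx, mul_zero]]
  have hswap := G.sum_sum_neighborFinset_comm S (fun x y => (c x y : ℂ) * (f x * g y))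
    fun x _ y hy hyS => ⟨by rw [hS y hyS, mul_zero, mul_zero],
      by rw [hSbdry x y ((G.mem_neighborFinset _ _).1 hy) hyS, mul_zero, mul_zero]⟩
  have hexpand : ∀ A B : V → ℂ, ∑ x ∈ S, A x * G.laplacian c B x =
      ∑ x ∈ S, ∑ y ∈ G.neighborFinset x, (c x y : ℂ) * (A x * B x) -
        ∑ x ∈ S, ∑ y ∈ G.neighborFinset x, (c x y : ℂ) * (A x * B y) := fun A B => by
    simp only [laplacian, Finset.mul_sum, ← Finset.sum_sub_distrib]
    exact Finset.sum_congr rfl fun x _ => Finset.sum_congr rfl fun y _ => by ring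
  simp only [mul_comm (G.laplacian c f _), hexpand, hswap]
  congr 1 <;> refine Finset.sum_congr rfl fun x _ => Finset.sum_congr rfl fun y _ => ?_
  · ring
  · rw [hsymm y x]; ring

theorem re_tsum_conj_mul_laplacian_nonneg (hsymm : ∀ x y, c x y = c y x)
    (hc : ∀ x y, G.Adj x y → 0 ≤ c x y) {f : V → ℂ} (hf : (Function.support f).Finite) :
    0 ≤ (∑' x, conj (f x) * G.laplacian c f x).re := by
  obtain ⟨S, hS, hSbdry⟩ := G.exists_finset_neighborhood_support hf
  rw [tsum_eq_sum (s := S) fun x hx => by rw [hS x hx, map_zero, zero_mul]]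
  set Φ : V → V → ℂ := fun x y => (c x y : ℂ) * (conj (f x) * (f x - f y))
  have hswap := G.sum_sum_neighborFinset_comm S Φ fun x _ y hy hyS =>
    ⟨by simp only [Φ, hSbdry x y ((G.mem_neighborFinset _ _).1 hy) hyS, map_zero, zero_mul,
      mul_zero], by simp only [Φ, hS y hyS, map_zero, zero_mul, mul_zero]⟩
  have hΦ : ∑ x ∈ S, conj (f x) * G.laplacian c f x = ∑ x ∈ S, ∑ y ∈ G.neighborFinset x, Φ x y :=
    Finset.sum_congr rfl fun x _ => by
      simp only [laplacian, Finset.mul_sum, Φ]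
      exact Finset.sum_congr rfl fun y _ => by ring
  have henergy : 2 * ∑ x ∈ S, conj (f x) * G.laplacian c f x =
      ((∑ x ∈ S, ∑ y ∈ G.neighborFinset x, c x y * ‖f x - f y‖ ^ 2 : ℝ) : ℂ) := by
    rw [two_mul, hΦ]
    nth_rewrite 2 [hswap]
    rw [← Finset.sum_add_distrib]
    push_cast
    refine Finset.sum_congr rfl fun x _ => ?_
    rw [← Finset.sum_add_distrib]
    refine Finset.sum_congr rfl fun y _ => ?_
    simp only [Φ, hsymm y x, ← Complex.conj_mul', map_sub]
    ring
  have hnonneg : 0 ≤ ∑ x ∈ S, ∑ y ∈ G.neighborFinset x, c x y * ‖f x - f y‖ ^ 2 :=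
    Finset.sum_nonneg fun x _ => Finset.sum_nonneg fun y hy =>
      mul_nonneg (hc x y ((G.mem_neighborFinset _ _).1 hy)) (sq_nonneg _)
  have := congrArg Complex.re henergy
  rw [Complex.mul_re, Complex.re_ofNat, Complex.im_ofNat, zero_mul, sub_zero,
    Complex.ofReal_re] at this
  linarith

theorem re_conj_mul_laplacian_nonneg_of_forall_norm_le (hc : ∀ x y, G.Adj x y → 0 ≤ c x y)
    {f : V → ℂ} {x : V} (hx : ∀ y, ‖f y‖ ≤ ‖f x‖) :
    0 ≤ (conj (f x) * G.laplacian c f x).re := by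
  rw [laplacian, Finset.mul_sum, Complex.re_sum]
  refine Finset.sum_nonneg fun y hy => ?_
  rw [mul_left_comm, Complex.re_ofReal_mul]
  refine mul_nonneg (hc x y ((G.mem_neighborFinset _ _).1 hy)) ?_
  rw [mul_sub, Complex.sub_re, Complex.conj_mul', ← Complex.ofReal_pow, Complex.ofReal_re,
    sub_nonneg]
  calc (conj (f x) * f y).re ≤ ‖conj (f x) * f y‖ := Complex.re_le_norm _
    _ = ‖f x‖ * ‖f y‖ := by rw [norm_mul, Complex.norm_conj]
    _ ≤ ‖f x‖ ^ 2 := by rw [sq]; exact mul_le_mul_of_nonneg_left (hx y) (norm_nonneg _)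

theorem eq_zero_of_laplacian_eq_neg (hc : ∀ x y, G.Adj x y → 0 ≤ c x y) {f : V → ℂ}
    (hf : Tendsto f cofinite (𝓝 0)) (hΔ : ∀ x, G.laplacian c f x = -f x) : f = 0 := by
  funext y
  have : Nonempty V := ⟨y⟩
  obtain ⟨x, hx⟩ := exists_forall_norm_le_of_tendsto_zero (by simpa using hf.norm)
  have h := G.re_conj_mul_laplacian_nonneg_of_forall_norm_le c hc hx
  rw [hΔ, mul_neg, Complex.conj_mul', Complex.neg_re, ← Complex.ofReal_pow, Complex.ofReal_re,
    neg_nonneg] at h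
  have hx0 : ‖f x‖ = 0 := pow_eq_zero_iff two_ne_zero |>.1 (le_antisymm h (sq_nonneg _))
  exact norm_le_zero_iff.1 ((hx y).trans hx0.le)

structure IsFinsuppLaplacian (T : ℓ²(V, ℂ) →ₗ.[ℂ] ℓ²(V, ℂ)) : Prop where
  mem_domain_iff : ∀ f : ℓ²(V, ℂ), f ∈ T.domain ↔ (Function.support f).Finite
  apply_eq : ∀ (u : T.domain) (x : V), T u x = G.laplacian c u x

namespace IsFinsuppLaplacian

variable {G c} {T : ℓ²(V, ℂ) →ₗ.[ℂ] ℓ²(V, ℂ)}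

theorem dense_domain (hT : G.IsFinsuppLaplacian c T) : Dense (T.domain : Set ℓ²(V, ℂ)) := by
  rw [show (T.domain : Set ℓ²(V, ℂ)) = _ from Set.ext hT.mem_domain_iff]
  exact lp.dense_setOf_finite_support ENNReal.ofNat_ne_top

theorem isFormalAdjoint (hT : G.IsFinsuppLaplacian c T) (hsymm : ∀ x y, c x y = c y x) :
    T.IsFormalAdjoint T := fun u v => by
  simp only [lp.inner_eq_tsum_conj_mul, hT.apply_eq, ← G.laplacian_conj]
  exact (G.tsum_mul_laplacian_comm c hsymm _ ((hT.mem_domain_iff v).1 v.2)).symm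

theorem re_inner_apply_nonneg (hT : G.IsFinsuppLaplacian c T) (hsymm : ∀ x y, c x y = c y x)
    (hc : ∀ x y, G.Adj x y → 0 ≤ c x y) (u : T.domain) :
    0 ≤ re (inner ℂ (u : ℓ²(V, ℂ)) (T u)) := by
  simp only [lp.inner_eq_tsum_conj_mul, hT.apply_eq]
  exact G.re_tsum_conj_mul_laplacian_nonneg c hsymm hc ((hT.mem_domain_iff u).1 u.2)

theorem adjoint_apply (hT : G.IsFinsuppLaplacian c T) (hsymm : ∀ x y, c x y = c y x)
    (v : T.adjoint.domain) (x : V) : T.adjoint v x = G.laplacian c v x := by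
  classical
  have hδ : lp.single 2 x (1 : ℂ) ∈ T.domain := (hT.mem_domain_iff _).2 <|
    (Set.finite_singleton x).subset fun y hy =>
      by_contra fun hyx => hy (lp.single_apply_ne 2 x _ hyx)
  have h := LinearPMap.adjoint_isFormalAdjoint hT.dense_domain v ⟨_, hδ⟩
  rw [lp.inner_single_right, RCLike.inner_apply', mul_one, lp.inner_eq_tsum_conj_mul] at h
  simp only [hT.apply_eq] at h
  rw [G.tsum_mul_laplacian_comm c hsymm _ ((hT.mem_domain_iff _).1 hδ),
    tsum_eq_single x fun y hy => by rw [lp.single_apply_ne 2 x _ hy, mul_zero],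
    lp.single_apply_self, mul_one, G.laplacian_conj] at h
  exact (starRingEnd ℂ).injective h

end IsFinsuppLaplacian

end SimpleGraph

theorem graphLaplacian_essentially_selfadjoint_general {V : Type*}
    (G : SimpleGraph V) [G.LocallyFinite]
    (c : V → V → ℝ)
    (hsymm : ∀ x y, c x y = c y x)
    (hpos : ∀ x y, G.Adj x y → 0 < c x y)
    (T : lp (fun _ : V => ℂ) 2 →ₗ.[ℂ] lp (fun _ : V => ℂ) 2)
    (hdom : ∀ f : lp (fun _ : V => ℂ) 2, f ∈ T.domain ↔ (Function.support (⇑f)).Finite)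
    (haction : ∀ u : T.domain, ∀ x : V,
      (T u : lp (fun _ : V => ℂ) 2) x
        = ∑ y ∈ G.neighborFinset x, (c x y : ℂ) * ((u : lp (fun _ : V => ℂ) 2) x
            - (u : lp (fun _ : V => ℂ) 2) y)) :
    T.adjoint = T.closure := by
  have hT : G.IsFinsuppLaplacian c T := ⟨hdom, haction⟩
  have hc : ∀ x y, G.Adj x y → 0 ≤ c x y := fun x y h => (hpos x y h).le
  refine LinearPMap.adjoint_eq_closure_of_re_inner_nonneg hT.dense_domain
    (hT.isFormalAdjoint hsymm) (hT.re_inner_apply_nonneg hsymm hc) fun v hv => ?_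
  refine lp.ext (G.eq_zero_of_laplacian_eq_neg c hc
    (tendsto_zero_iff_norm_tendsto_zero.2 (lp.tendsto_norm_cofinite_zero (by simp) _)) fun x => ?_)
  rw [← hT.adjoint_apply hsymm, hv, lp.coeFn_neg, Pi.neg_apply]

/-- Main Theorem: the graph Laplacian of a connected locally finite simple graph on a countably
infinite vertex set, with any conductance function, defined on the finitely supported functions
in `ℓ²(V)`, is essentially selfadjoint: its adjoint equals its closure. -/
theorem graphLaplacian_essentially_selfadjoint {V : Type*} [Countable V] [Infinite V]
    (G : SimpleGraph V) [DecidableRel G.Adj] [G.LocallyFinite]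
    (hconn : G.Connected) (c : V → V → ℝ)
    (hsymm : ∀ x y, c x y = c y x)
    (hpos : ∀ x y, G.Adj x y → 0 < c x y)
    (hzero : ∀ x y, ¬ G.Adj x y → c x y = 0)
    (T : lp (fun _ : V => ℂ) 2 →ₗ.[ℂ] lp (fun _ : V => ℂ) 2)
    (hdom : ∀ f : lp (fun _ : V => ℂ) 2, f ∈ T.domain ↔ (Function.support (⇑f)).Finite)
    (haction : ∀ u : T.domain, ∀ x : V,
      (T u : lp (fun _ : V => ℂ) 2) x
        = ∑ y ∈ G.neighborFinset x, (c x y : ℂ) * ((u : lp (fun _ : V => ℂ) 2) x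
            - (u : lp (fun _ : V => ℂ) 2) y)) :
    T.adjoint = T.closure :=
  graphLaplacian_essentially_selfadjoint_general G c hsymm hpos T hdom haction
end

section
/- (Existence of voltage potentials) Let G be a connected locally finite simple graph with conductance function c, and let α, β ∈ V be distinct vertices. Then there exists a function v : V → ℝ of finite energy, i.e. the sum E_c(v) = Σ over ordered adjacent pairs (x,y) of c x y · (v(x) − v(y))² converges, such that for every x ∈ V, Σ_{y adjacent to x} c x y · (v(x) − v(y)) = δ_α(x) − δ_β(x) (where δ_α is the indicator of α), and moreover E_c(v) = 2 · (v(α) − v(β)). -/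
/-!
Let `S` be the space of functions `u` with `u β = 0` whose weighted gradient
`(x, y) ↦ √(c x y) (u x − u y)` lies in `ℓ²(V × V)`. Along a walk from `β` to `x`, each edge bounds
`|u x − u β|` by a multiple of that `ℓ²` norm, so on the connected graph the gradient map is
injective, evaluation at every vertex is continuous, and the range of the gradient map is closed
(pointwise limits of potentials are potentials of the `ℓ²` limit). The range is therefore a Hilbert
space, and the Riesz representative of `2 · (evaluation at α)` is the gradient of `v`.
Testing against `δ_x` gives `Δ_c v = δ_α − δ_β`, testing against `v` the energy identity.
-/

open scoped lp

namespace SimpleGraph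

variable {V : Type*} {G : SimpleGraph V} [DecidableRel G.Adj] {c : V → V → ℝ}

variable (G c) in
noncomputable def weightedGrad : (V → ℝ) →ₗ[ℝ] V × V → ℝ where
  toFun u p := if G.Adj p.1 p.2 then √(c p.1 p.2) * (u p.1 - u p.2) else 0
  map_add' u w := by ext p; dsimp only [Pi.add_apply]; split_ifs <;> ring
  map_smul' r u := by
    ext p; simp only [Pi.smul_apply, smul_eq_mul, RingHom.id_apply]; split_ifs <;> ring

lemma weightedGrad_apply (u : V → ℝ) (p : V × V) :
    G.weightedGrad c u p = if G.Adj p.1 p.2 then √(c p.1 p.2) * (u p.1 - u p.2) else 0 := rfl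

lemma weightedGrad_sub_const (u : V → ℝ) (t : ℝ) :
    G.weightedGrad c (fun x => u x - t) = G.weightedGrad c u := by
  ext p; simp only [weightedGrad_apply, sub_sub_sub_cancel_right]

lemma continuous_weightedGrad : Continuous (G.weightedGrad c) :=
  continuous_pi fun p => by
    simp only [weightedGrad_apply]
    split_ifs <;> fun_prop

lemma sqrt_mul_abs_sub_le_norm {u : V → ℝ} {f : ℓ²(V × V, ℝ)} (hf : ⇑f = G.weightedGrad c u)
    {a b : V} (hab : G.Adj a b) : √(c a b) * |u a - u b| ≤ ‖f‖ := by
  have := lp.norm_apply_le_norm two_ne_zero f (a, b)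
  rwa [hf, weightedGrad_apply, if_pos hab, Real.norm_eq_abs, abs_mul,
    abs_of_nonneg (Real.sqrt_nonneg _)] at this

lemma Walk.exists_abs_sub_le_mul_norm (hpos : ∀ x y, G.Adj x y → 0 < c x y) {a b : V}
    (w : G.Walk a b) : ∃ C, ∀ (u : V → ℝ) (f : ℓ²(V × V, ℝ)), ⇑f = G.weightedGrad c u →
      |u a - u b| ≤ C * ‖f‖ := by
  induction w with
  | nil => exact ⟨0, fun u f _ => by simp⟩
  | @cons a a' b hadj w ih =>
    obtain ⟨C, hC⟩ := ih
    refine ⟨(√(c a a'))⁻¹ + C, fun u f hf => ?_⟩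
    have hedge : |u a - u a'| ≤ (√(c a a'))⁻¹ * ‖f‖ := by
      rw [inv_mul_eq_div, le_div_iff₀' (Real.sqrt_pos.2 (hpos a a' hadj))]
      exact sqrt_mul_abs_sub_le_norm hf hadj
    calc |u a - u b| ≤ |u a - u a'| + |u a' - u b| := abs_sub_le _ _ _
      _ ≤ (√(c a a'))⁻¹ * ‖f‖ + C * ‖f‖ := add_le_add hedge (hC u f hf)
      _ = ((√(c a a'))⁻¹ + C) * ‖f‖ := (add_mul _ _ _).symm

lemma Connected.exists_abs_sub_le_mul_norm (hconn : G.Connected)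
    (hpos : ∀ x y, G.Adj x y → 0 < c x y) (a b : V) :
    ∃ C, ∀ (u : V → ℝ) (f : ℓ²(V × V, ℝ)), ⇑f = G.weightedGrad c u → |u a - u b| ≤ C * ‖f‖ :=
  let ⟨w⟩ := hconn.preconnected a b
  w.exists_abs_sub_le_mul_norm hpos

variable (G c) in
def energySpace (β : V) : Submodule ℝ (V → ℝ) where
  carrier := {u | u β = 0 ∧ Memℓp (G.weightedGrad c u) 2}
  add_mem' {u w} hu hw := ⟨by simp [hu.1, hw.1], by rw [map_add]; exact hu.2.add hw.2⟩
  zero_mem' := ⟨rfl, by rw [map_zero]; exact zero_memℓp⟩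
  smul_mem' r u hu := ⟨by simp [hu.1], by rw [map_smul]; exact hu.2.const_smul r⟩

variable (G c) in
noncomputable def gradLp (β : V) : G.energySpace c β →ₗ[ℝ] ℓ²(V × V, ℝ) where
  toFun u := ⟨G.weightedGrad c u, u.2.2⟩
  map_add' u w := lp.ext (map_add (G.weightedGrad c) u.1 w.1)
  map_smul' r u := lp.ext (map_smul (G.weightedGrad c) r u.1)

lemma coe_gradLp {β : V} (u : G.energySpace c β) : ⇑(G.gradLp c β u) = G.weightedGrad c u := rfl

lemma gradLp_injective (hconn : G.Connected) (hpos : ∀ x y, G.Adj x y → 0 < c x y) (β : V) :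
    Function.Injective (G.gradLp c β) := by
  refine (injective_iff_map_eq_zero _).2 fun u hu => Subtype.ext <| funext fun x => ?_
  obtain ⟨C, hC⟩ := hconn.exists_abs_sub_le_mul_norm hpos x β
  have := hC u _ (coe_gradLp u)
  rwa [hu, norm_zero, mul_zero, u.2.1, sub_zero, abs_nonpos_iff] at this

noncomputable def potentialEval (hconn : G.Connected) (hpos : ∀ x y, G.Adj x y → 0 < c x y)
    (β x : V) : LinearMap.range (G.gradLp c β) →L[ℝ] ℝ :=
  LinearMap.mkContinuousOfExistsBound
    (LinearMap.proj x ∘ₗ (G.energySpace c β).subtype ∘ₗ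
      (LinearEquiv.ofInjective _ (gradLp_injective hconn hpos β)).symm.toLinearMap) <| by
    obtain ⟨C, hC⟩ := hconn.exists_abs_sub_le_mul_norm hpos x β
    refine ⟨C, fun k => ?_⟩
    set u := (LinearEquiv.ofInjective _ (gradLp_injective hconn hpos β)).symm k
    have := hC u (G.gradLp c β u) (coe_gradLp u)
    rwa [u.2.1, sub_zero, LinearEquiv.ofInjective_symm_apply] at this

lemma potentialEval_apply (hconn : G.Connected) (hpos : ∀ x y, G.Adj x y → 0 < c x y)
    {β : V} (k : LinearMap.range (G.gradLp c β)) (x : V) :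
    potentialEval hconn hpos β x k =
      ((LinearEquiv.ofInjective _ (gradLp_injective hconn hpos β)).symm k : V → ℝ) x := rfl

open Filter Topology in
lemma isClosed_range_gradLp (hconn : G.Connected) (hpos : ∀ x y, G.Adj x y → 0 < c x y)
    (β : V) : IsClosed (LinearMap.range (G.gradLp c β) : Set ℓ²(V × V, ℝ)) := by
  set e := LinearEquiv.ofInjective _ (gradLp_injective hconn hpos β)
  refine isClosed_of_closure_subset fun g hg => ?_
  obtain ⟨k, hkK, hk⟩ := mem_closure_iff_seq_limit.1 hg
  let k' : ℕ → LinearMap.range (G.gradLp c β) := fun n => ⟨k n, hkK n⟩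
  have hcauchy : CauchySeq k' :=
    Metric.cauchySeq_iff.2 fun ε hε => Metric.cauchySeq_iff.1 hk.cauchySeq ε hε
  choose v hv using fun x => cauchySeq_tendsto_of_complete
    ((potentialEval hconn hpos β x).uniformContinuous.comp_cauchySeq hcauchy)
  have hgrad : G.weightedGrad c v = ⇑g := by
    refine tendsto_nhds_unique ((continuous_weightedGrad.tendsto v).comp (tendsto_pi_nhds.2 hv))
      (((lp.uniformContinuous_coe.continuous.tendsto g).comp hk).congr fun n => ?_)
    simp only [Function.comp_apply, potentialEval_apply]
    exact congrArg (⇑) (LinearEquiv.ofInjective_symm_apply (G.gradLp c β) (k' n)).symm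
  have hvβ : v β = 0 :=
    tendsto_nhds_unique (hv β) (tendsto_const_nhds.congr fun n => (e.symm (k' n)).2.1.symm)
  exact ⟨⟨v, hvβ, hgrad ▸ g.2⟩, lp.ext hgrad⟩

lemma exists_weak_voltage (hconn : G.Connected) (hpos : ∀ x y, G.Adj x y → 0 < c x y)
    (α β : V) : ∃ v : V → ℝ, Memℓp (G.weightedGrad c v) 2 ∧
      ∀ u : V → ℝ, Memℓp (G.weightedGrad c u) 2 →
        HasSum (fun p => G.weightedGrad c v p * G.weightedGrad c u p) (2 * (u α - u β)) := by
  set e := LinearEquiv.ofInjective _ (gradLp_injective hconn hpos β)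
  have := (isClosed_range_gradLp hconn hpos β).completeSpace_coe
  set w := (InnerProductSpace.toDual ℝ _).symm ((2 : ℝ) • potentialEval hconn hpos β α)
  refine ⟨e.symm w, (e.symm w).2.2, fun u hu => ?_⟩
  let u₀ : G.energySpace c β := ⟨fun x => u x - u β, sub_self _, by rwa [weightedGrad_sub_const]⟩
  have hw : inner ℝ (w : ℓ²(V × V, ℝ)) (G.gradLp c β u₀) = 2 * (u α - u β) := by
    change inner ℝ (w : ℓ²(V × V, ℝ)) (e u₀ : ℓ²(V × V, ℝ)) = _
    rw [← Submodule.coe_inner, InnerProductSpace.toDual_symm_apply, FunLike.coe_smul, Pi.smul_apply,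
      potentialEval_apply, LinearEquiv.symm_apply_apply, smul_eq_mul]
  have hwv : ⇑(w : ℓ²(V × V, ℝ)) = G.weightedGrad c (e.symm w) :=
    congrArg (⇑) (LinearEquiv.ofInjective_symm_apply (G.gradLp c β) w).symm
  have hsum := lp.hasSum_inner (𝕜 := ℝ) (w : ℓ²(V × V, ℝ)) (G.gradLp c β u₀)
  rw [hw, hwv, coe_gradLp, weightedGrad_sub_const] at hsum
  simpa only [Real.inner_apply, mul_comm] using hsum

variable (G c) in
def current (v : V → ℝ) (p : V × V) : ℝ :=
  if G.Adj p.1 p.2 then c p.1 p.2 * (v p.1 - v p.2) else 0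

lemma weightedGrad_mul_weightedGrad (hc : ∀ x y, G.Adj x y → 0 ≤ c x y) (u w : V → ℝ)
    (p : V × V) :
    G.weightedGrad c u p * G.weightedGrad c w p = G.current c u p * (w p.1 - w p.2) := by
  simp only [weightedGrad_apply, current]
  split_ifs with h
  · linear_combination (u p.1 - u p.2) * (w p.1 - w p.2) * Real.mul_self_sqrt (hc _ _ h)
  · ring

lemma current_swap (hsymm : ∀ x y, c x y = c y x) (v : V → ℝ) (p : V × V) :
    G.current c v p.swap = -G.current c v p := by
  simp only [current, Prod.fst_swap, Prod.snd_swap, G.adj_comm p.2, hsymm p.2]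
  split_ifs <;> ring

variable [G.LocallyFinite] [DecidableEq V]

lemma hasSum_current_mul_ite_fst (v : V → ℝ) (x : V) :
    HasSum (fun p => G.current c v p * if x = p.1 then 1 else 0)
      (∑ y ∈ G.neighborFinset x, c x y * (v x - v y)) := by
  have hsupp : ∀ p ∉ Set.range (Prod.mk x), (G.current c v p * if x = p.1 then 1 else 0) = 0 := by
    rintro ⟨a, b⟩ hp
    have : x ≠ a := by rintro rfl; exact hp ⟨b, rfl⟩
    simp [this]
  rw [← (Prod.mk_right_injective x).hasSum_iff hsupp]
  have hfin := hasSum_sum_of_ne_finset_zero (L := .unconditional V) (s := G.neighborFinset x)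
    (f := fun y => G.current c v (x, y) * if x = (x, y).1 then 1 else 0) fun y hy => by
      simp [current, (G.mem_neighborFinset x y).not.mp hy]
  rwa [Finset.sum_congr rfl fun y hy => show _ = c x y * (v x - v y) by
    simp [current, (G.mem_neighborFinset x y).mp hy]] at hfin

lemma hasSum_current_mul_sub_ite (hsymm : ∀ x y, c x y = c y x) (v : V → ℝ) (x : V) :
    HasSum (fun p => G.current c v p * ((if x = p.1 then 1 else 0) - if x = p.2 then 1 else 0))
      (2 * ∑ y ∈ G.neighborFinset x, c x y * (v x - v y)) := by
  have hsnd : HasSum (fun p => G.current c v p * if x = p.2 then 1 else 0)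
      (-∑ y ∈ G.neighborFinset x, c x y * (v x - v y)) := by
    rw [← (Equiv.prodComm V V).hasSum_iff]
    refine (hasSum_current_mul_ite_fst v x).neg.congr_fun fun p => ?_
    by_cases h : x = p.1 <;> simp [h, current_swap hsymm]
  rw [two_mul, ← sub_neg_eq_add]
  exact ((hasSum_current_mul_ite_fst v x).sub hsnd).congr_fun fun p => by ring

lemma memℓp_weightedGrad_ite (x : V) :
    Memℓp (G.weightedGrad c fun z => if x = z then 1 else 0) 2 := by
  let s : Finset (V × V) := {x} ×ˢ G.neighborFinset x ∪ G.neighborFinset x ×ˢ {x}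
  refine (memℓp_zero (s.finite_toSet.subset fun p hp => ?_)).of_exponent_ge zero_le
  obtain ⟨a, b⟩ := p
  simp only [Set.mem_ofPred_eq, weightedGrad_apply, ne_eq, ite_eq_right_iff, not_forall,
    mul_eq_zero, not_or] at hp
  obtain ⟨hab, -, hne⟩ := hp
  simp only [s, Finset.coe_union, Finset.coe_product, Finset.coe_singleton, coe_neighborFinset,
    Set.mem_union, Set.mem_prod, Set.mem_singleton_iff, mem_neighborSet]
  by_cases h : x = a
  · subst h; exact Or.inl ⟨rfl, hab⟩
  · have : x = b := by by_contra h'; simp [h, h'] at hne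
    subst this; exact Or.inr ⟨hab.symm, rfl⟩

end SimpleGraph

theorem exists_voltage_potential_general {V : Type*} [DecidableEq V] (G : SimpleGraph V) [DecidableRel G.Adj]
    [G.LocallyFinite] (hconn : G.Connected) (c : V → V → ℝ)
    (hsymm : ∀ x y, c x y = c y x)
    (hpos : ∀ x y, G.Adj x y → 0 < c x y)
    (α β : V) :
    ∃ v : V → ℝ,
      Summable (fun p : V × V =>
        if G.Adj p.1 p.2 then c p.1 p.2 * (v p.1 - v p.2) ^ 2 else 0)
      ∧ (∀ x, ∑ y ∈ G.neighborFinset x, c x y * (v x - v y)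
          = (if x = α then 1 else 0) - (if x = β then 1 else 0))
      ∧ (∑' p : V × V, if G.Adj p.1 p.2 then c p.1 p.2 * (v p.1 - v p.2) ^ 2 else 0)
          = 2 * (v α - v β) := by
  obtain ⟨v, hv, hweak⟩ := G.exists_weak_voltage hconn hpos α β
  have hc : ∀ x y, G.Adj x y → 0 ≤ c x y := fun x y h => (hpos x y h).le
  have henergy : HasSum (fun p : V × V =>
      if G.Adj p.1 p.2 then c p.1 p.2 * (v p.1 - v p.2) ^ 2 else 0) (2 * (v α - v β)) :=
    (hweak v hv).congr_fun fun p => by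
      rw [G.weightedGrad_mul_weightedGrad hc, SimpleGraph.current]
      split_ifs <;> ring
  refine ⟨v, henergy.summable, fun x => ?_, henergy.tsum_eq⟩
  have hflux := (G.hasSum_current_mul_sub_ite hsymm v x).unique <|
    (hweak _ (G.memℓp_weightedGrad_ite x)).congr_fun fun p =>
      (G.weightedGrad_mul_weightedGrad hc v (fun z => if x = z then 1 else 0) p).symm
  linarith

/-- Existence of voltage potentials: on a connected locally finite simple graph with conductance
`c`, for distinct vertices `α ≠ β` there is a finite-energy function `v` with
`Δ_c v = δ_α − δ_β` and `E_c(v) = 2(v(α) − v(β))`. -/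
theorem exists_voltage_potential {V : Type*} [DecidableEq V] (G : SimpleGraph V) [DecidableRel G.Adj]
    [G.LocallyFinite] (hconn : G.Connected) (c : V → V → ℝ)
    (hsymm : ∀ x y, c x y = c y x)
    (hpos : ∀ x y, G.Adj x y → 0 < c x y)
    (hzero : ∀ x y, ¬ G.Adj x y → c x y = 0)
    (α β : V) (hne : α ≠ β) :
    ∃ v : V → ℝ,
      Summable (fun p : V × V =>
        if G.Adj p.1 p.2 then c p.1 p.2 * (v p.1 - v p.2) ^ 2 else 0)
      ∧ (∀ x, ∑ y ∈ G.neighborFinset x, c x y * (v x - v y)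
          = (if x = α then 1 else 0) - (if x = β then 1 else 0))
      ∧ (∑' p : V × V, if G.Adj p.1 p.2 then c p.1 p.2 * (v p.1 - v p.2) ^ 2 else 0)
          = 2 * (v α - v β) :=
  exists_voltage_potential_general G hconn c hsymm hpos α β
end

section
/- Fix an integer k ≥ 1 and a real number s. The function x ↦ (4·sin²(x/2))^s · sin(kx/2) / sin²(x/2) is square-integrable on the interval (−π, π) if and only if s > 1/4. (Here t^s denotes the real power of the nonnegative number t = 4·sin²(x/2).) -/
open Real MeasureTheory Set

/-! On `(-π, π)` one has `|x| / π ≤ |sin (x / 2)| ≤ |x| / 2`, so the squared integrand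
`2 ^ (4 s) |sin (x / 2)| ^ (4 s - 4) sin (k x / 2) ^ 2` is bounded above and, near `0`, below by
constant multiples of `|x| ^ (4 s - 2)`, which is integrable near `0` iff `4 s - 2 > -1`. -/

lemma rpow_le_rpow_add_rpow_of_le_of_le {a b y : ℝ} (ha : 0 < a) (hay : a ≤ y) (hyb : y ≤ b)
    (p : ℝ) : y ^ p ≤ a ^ p + b ^ p := by
  rcases le_total 0 p with hp | hp
  · have := rpow_le_rpow (ha.le.trans hay) hyb hp
    linarith [rpow_nonneg ha.le p]
  · have := rpow_le_rpow_of_nonpos ha hay hp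
    linarith [rpow_nonneg (ha.le.trans (hay.trans hyb)) p]

lemma abs_div_pi_le_abs_sin_half {x : ℝ} (hx : |x| ≤ π) : |x| / π ≤ |sin (x / 2)| := by
  have := mul_abs_le_abs_sin (x := x / 2) (by rw [abs_div, abs_two]; linarith)
  rw [abs_div, abs_two] at this
  calc |x| / π = 2 / π * (|x| / 2) := by field_simp
    _ ≤ |sin (x / 2)| := this

lemma abs_sin_half_le (x : ℝ) : |sin (x / 2)| ≤ |x| / 2 := by
  simpa [abs_div] using abs_sin_le_abs (x := x / 2)

lemma abs_sin_half_pos {x : ℝ} (hx₀ : x ≠ 0) (hx : |x| ≤ π) : 0 < |sin (x / 2)| :=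
  (div_pos (abs_pos.2 hx₀) pi_pos).trans_le (abs_div_pi_le_abs_sin_half hx)

lemma sq_four_mul_sq_rpow_mul_div_sq {a : ℝ} (ha : 0 < a) (s t : ℝ) :
    ((4 * a ^ 2) ^ s * t / a ^ 2) ^ 2 = 2 ^ (4 * s) * (a ^ (4 * s - 4) * t ^ 2) := by
  have h_num : ((4 * a ^ 2) ^ s) ^ 2 = 2 ^ (4 * s) * a ^ (4 * s) := by
    rw [← rpow_mul_natCast (by positivity), mul_rpow (by norm_num) (by positivity),
      ← rpow_natCast a 2, ← rpow_mul ha.le, show (4 : ℝ) = 2 ^ (2 : ℝ) by norm_num,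
      ← rpow_mul zero_le_two]
    ring_nf
  rw [div_pow, mul_pow, h_num, rpow_sub ha, ← pow_mul, ← rpow_natCast a]
  ring_nf

lemma intervalIntegrable_abs_rpow {t : ℝ} (ht : -1 < t) (a b : ℝ) :
    IntervalIntegrable (fun x : ℝ => |x| ^ t) volume a b := by
  have h_nonneg : ∀ c, 0 ≤ c → IntervalIntegrable (fun x : ℝ => |x| ^ t) volume 0 c :=
    fun c hc => (intervalIntegral.intervalIntegrable_rpow' ht).congr fun x hx => by
      rw [uIoc_of_le hc] at hx
      rw [abs_of_pos hx.1]
  have h_zero : ∀ c, IntervalIntegrable (fun x : ℝ => |x| ^ t) volume 0 c := fun c => by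
    rcases le_total 0 c with hc | hc
    · exact h_nonneg c hc
    · simpa using (IntervalIntegrable.iff_comp_neg).mp (h_nonneg (-c) (by linarith))
  exact (h_zero a).symm.trans (h_zero b)

lemma abs_sin_half_rpow_mul_sin_sq_le {x : ℝ} (hx : |x| ≤ π) (p k : ℝ) :
    |sin (x / 2)| ^ p * sin (k * x / 2) ^ 2 ≤
      (π ^ (-p) + 2 ^ (-p)) * (k / 2) ^ 2 * |x| ^ (p + 2) := by
  rcases eq_or_ne x 0 with rfl | hx0
  · rw [mul_zero, zero_div, sin_zero, zero_pow two_ne_zero, mul_zero]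
    positivity
  have hx_pos : 0 < |x| := abs_pos.2 hx0
  have h_sin : |sin (x / 2)| ^ p ≤ (|x| / π) ^ p + (|x| / 2) ^ p :=
    rpow_le_rpow_add_rpow_of_le_of_le (by positivity) (abs_div_pi_le_abs_sin_half hx)
      (abs_sin_half_le x) p
  have h_sin_k : sin (k * x / 2) ^ 2 ≤ (k / 2) ^ 2 * |x| ^ 2 := by
    rw [sq_abs, ← mul_pow, mul_comm (k / 2), mul_div_assoc', mul_comm x k]
    exact sin_sq_le_sq
  calc |sin (x / 2)| ^ p * sin (k * x / 2) ^ 2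
      ≤ ((|x| / π) ^ p + (|x| / 2) ^ p) * ((k / 2) ^ 2 * |x| ^ 2) :=
        mul_le_mul h_sin h_sin_k (sq_nonneg _) (by positivity)
    _ = (π ^ (-p) + 2 ^ (-p)) * (k / 2) ^ 2 * |x| ^ (p + 2) := by
        rw [div_rpow hx_pos.le pi_pos.le, div_rpow hx_pos.le zero_le_two, rpow_add hx_pos,
          rpow_neg pi_pos.le, rpow_neg zero_le_two, rpow_two]
        field_simp

lemma rpow_mul_le_abs_sin_half_rpow_mul_sin_sq {p k x : ℝ} (hp : p ≤ 0) (hx : 0 < x)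
    (hxπ : x ≤ π) (hkx : |k * x| ≤ π) :
    2 ^ (-p) * (k / π) ^ 2 * x ^ (p + 2) ≤ |sin (x / 2)| ^ p * sin (k * x / 2) ^ 2 := by
  have h_sin : (x / 2) ^ p ≤ |sin (x / 2)| ^ p :=
    rpow_le_rpow_of_nonpos (abs_sin_half_pos hx.ne' (by rwa [abs_of_pos hx]))
      (by simpa [abs_of_pos hx] using abs_sin_half_le x) hp
  have h_sin_k : (k / π) ^ 2 * x ^ 2 ≤ sin (k * x / 2) ^ 2 := by
    calc (k / π) ^ 2 * x ^ 2 = (|k * x| / π) ^ 2 := by rw [div_pow, div_pow, sq_abs]; ring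
      _ ≤ |sin (k * x / 2)| ^ 2 :=
        pow_le_pow_left₀ (by positivity) (abs_div_pi_le_abs_sin_half hkx) 2
      _ = sin (k * x / 2) ^ 2 := sq_abs _
  calc 2 ^ (-p) * (k / π) ^ 2 * x ^ (p + 2) = (x / 2) ^ p * ((k / π) ^ 2 * x ^ 2) := by
        rw [div_rpow hx.le zero_le_two, rpow_add hx, rpow_neg zero_le_two, rpow_two]
        field_simp
    _ ≤ |sin (x / 2)| ^ p * sin (k * x / 2) ^ 2 :=
        mul_le_mul h_sin h_sin_k (by positivity) (by positivity)

theorem integrableOn_abs_sin_half_rpow_mul_sin_sq_iff {k : ℝ} (hk : k ≠ 0) (p : ℝ) :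
    IntegrableOn (fun x => |sin (x / 2)| ^ p * sin (k * x / 2) ^ 2) (Ioo (-π) π) ↔ -3 < p := by
  constructor
  · intro h
    by_contra! hp
    set δ := min π (π / |k|)
    have hδ : 0 < δ := lt_min pi_pos (div_pos pi_pos (abs_pos.2 hk))
    have h_sub : Ioo 0 δ ⊆ Ioo (-π) π := fun x hx =>
      ⟨by linarith [hx.1, pi_pos], hx.2.trans_le (min_le_left _ _)⟩
    have h_lower : IntegrableOn (fun x => 2 ^ (-p) * (k / π) ^ 2 * x ^ (p + 2)) (Ioo 0 δ) := by
      refine (h.mono_set h_sub).mono' (by fun_prop) ?_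
      filter_upwards [ae_restrict_mem measurableSet_Ioo] with x hx
      have hkx : |k * x| ≤ π := by
        rw [abs_mul, abs_of_pos hx.1, ← le_div_iff₀' (abs_pos.2 hk)]
        exact (hx.2.trans_le (min_le_right _ _)).le
      rw [norm_of_nonneg (by have := rpow_nonneg hx.1.le (p + 2); positivity)]
      exact rpow_mul_le_abs_sin_half_rpow_mul_sin_sq (by linarith) hx.1
        (hx.2.trans_le (min_le_left _ _)).le hkx
    have h_rpow := (integrable_const_mul_iff (IsUnit.mk0 _ (by positivity)) _).1 h_lower
    linarith [(intervalIntegral.integrableOn_Ioo_rpow_iff hδ).1 h_rpow]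
  · intro hp
    have h_upper : IntegrableOn (fun x => (π ^ (-p) + 2 ^ (-p)) * (k / 2) ^ 2 * |x| ^ (p + 2))
        (Ioo (-π) π) :=
      ((intervalIntegrable_iff_integrableOn_Ioo_of_le (by linarith [pi_pos])).1
        (intervalIntegrable_abs_rpow (by linarith) _ _)).const_mul _
    refine h_upper.mono' (by fun_prop) ?_
    filter_upwards [ae_restrict_mem measurableSet_Ioo] with x hx
    rw [norm_of_nonneg (by have := rpow_nonneg (abs_nonneg (sin (x / 2))) p; positivity)]
    exact abs_sin_half_rpow_mul_sin_sq_le (abs_lt.2 hx).le p k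

/-- The Fourier transform of the voltage potential `v` solving `Δv = δ_0 − δ_k` on `ℤ` lies in
the domain of `Δ^s` iff `s > 1/4`: the function
`x ↦ (4 sin²(x/2))^s · sin(kx/2) / sin²(x/2)` is square-integrable on `(−π, π)` iff `s > 1/4`. -/
theorem potential_in_Hs_iff (k : ℤ) (hk : 1 ≤ k) (s : ℝ) :
    IntegrableOn
      (fun x : ℝ =>
        ((4 * Real.sin (x / 2) ^ 2) ^ s * Real.sin ((k : ℝ) * x / 2)
          / Real.sin (x / 2) ^ 2) ^ 2)
      (Set.Ioo (-π) π) ↔ 1 / 4 < s := by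
  have hk₀ : (k : ℝ) ≠ 0 := by exact_mod_cast (by omega : k ≠ 0)
  have h_eq : EqOn
      (fun x : ℝ => ((4 * sin (x / 2) ^ 2) ^ s * sin (k * x / 2) / sin (x / 2) ^ 2) ^ 2)
      (fun x => 2 ^ (4 * s) * (|sin (x / 2)| ^ (4 * s - 4) * sin (k * x / 2) ^ 2))
      (Ioo (-π) π) := by
    intro x hx
    rcases eq_or_ne x 0 with rfl | hx₀
    · simp
    simpa only [sq_abs] using
      sq_four_mul_sq_rpow_mul_div_sq (abs_sin_half_pos hx₀ (abs_lt.2 hx).le) s (sin (k * x / 2))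
  rw [integrableOn_congr_fun h_eq measurableSet_Ioo, IntegrableOn,
    integrable_const_mul_iff (IsUnit.mk0 _ (by positivity)), ← IntegrableOn,
    integrableOn_abs_sin_half_rpow_mul_sin_sq_iff hk₀]
  constructor <;> intro h <;> linarith
end

section
/- Let D ≥ 3 be a natural number and let k ∈ ℤ^D. Consider the lattice graph on ℤ^D (vertices n = (n_1,…,n_D), with n adjacent to n ± e_j for each coordinate vector e_j) with conductance identically 1, so the Laplacian is (Δv)(n) = Σ_{j=1}^{D} (2v(n) − v(n − e_j) − v(n + e_j)). Then there exists a square-summable function v : ℤ^D → ℝ (that is, Σ_n v(n)² < ∞) such that (Δv)(n) = δ_0(n) − δ_k(n) for every n ∈ ℤ^D. -/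
/-!
Fourier series on the torus `ℝᵈ/ℤᵈ` turn the lattice Laplacian into multiplication by its symbol
`σ(θ) = ∑ⱼ |1 - e(θⱼ)|²`, and `δ₀ - δₖ` into `1 - e(k·θ)`. So `v` can be taken to be the sequence
of Fourier coefficients of `(1 - e(k·θ)) / σ(θ)`, and the only issue is whether this function is
in `L²`. Near `θ = 0` the numerator is `O(|θ|)` while `σ(θ) ≥ 16 |θ|²`, so the quotient is
`O(|θ|⁻¹)`, which is square integrable exactly when `D ≥ 3`; Parseval then makes `v`
square summable.
-/

open MeasureTheory Metric Real UnitAddTorus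
open scoped ComplexConjugate

-- Mathlib's Fourier theory on the torus is stated for the Haar probability measure on `ℝ/ℤ`,
-- which it installs only as a local instance; the global `volume` on `AddCircle 1` is another term.
attribute [local instance] instMeasureSpaceUnitAddCircle instIsProbabilityMeasureUnitAddCircleVolume

lemma sq_norm_le_sum_sq {ι : Type*} [Fintype ι] (x : ι → ℝ) : ‖x‖ ^ 2 ≤ ∑ j, x j ^ 2 := by
  refine (Real.le_sqrt (norm_nonneg x) (by positivity)).1 ?_
  refine (pi_norm_le_iff_of_nonneg (Real.sqrt_nonneg _)).2 fun i => ?_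
  rw [Real.norm_eq_abs]
  exact Real.abs_le_sqrt (Finset.single_le_sum (fun j _ => sq_nonneg (x j)) (Finset.mem_univ i))

namespace UnitAddTorus

variable {d : Type*} [Fintype d]

lemma norm_mFourier_apply (m : d → ℤ) (y : UnitAddTorus d) : ‖mFourier m y‖ = 1 := by
  simp [mFourier, norm_prod, Circle.norm_coe]

lemma integral_mFourier (m : d → ℤ) : ∫ y, mFourier m y = if m = 0 then 1 else 0 := by
  have h := orthonormal_iff_ite.1 (orthonormal_mFourier (d := d)) 0 m
  simpa only [ContinuousMap.inner_toLp, mFourier_zero, ContinuousMap.one_apply, map_one, one_mul,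
    mul_one, eq_comm (a := (0 : d → ℤ))] using h

lemma integrable_mFourier_mul {f : UnitAddTorus d → ℂ} (hf : Integrable f) (m : d → ℤ) :
    Integrable (fun y => mFourier m y * f y) := by
  refine hf.bdd_mul (mFourier m).continuous.aestronglyMeasurable (c := 1) ?_
  refine Filter.Eventually.of_forall fun y => ?_
  simpa [mFourier_norm] using (mFourier m).norm_coe_le_norm y

lemma mFourierCoeff_mFourier_mul (f : UnitAddTorus d → ℂ) (m n : d → ℤ) :
    mFourierCoeff (fun y => mFourier m y * f y) n = mFourierCoeff f (n - m) := by
  unfold mFourierCoeff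
  congr 1 with y
  rw [smul_eq_mul, smul_eq_mul, ← mul_assoc, ← mFourier_add, neg_sub', sub_neg_eq_add]

lemma mFourierCoeff_one_sub_mFourier (k n : d → ℤ) :
    mFourierCoeff (fun y => 1 - mFourier k y) n
      = (if n = 0 then 1 else 0) - (if n = k then 1 else 0) := by
  have hint : ∀ m : d → ℤ, Integrable (fun y => mFourier m y) :=
    fun m => by simpa using integrable_mFourier_mul (integrable_const (1 : ℂ)) m
  simp only [mFourierCoeff, smul_eq_mul, mul_sub, mul_one, ← mFourier_add]
  rw [integral_sub (hint _) (hint _)]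
  simp only [integral_mFourier, neg_eq_zero, neg_add_eq_zero]

lemma summable_sq_norm_mFourierCoeff {f : UnitAddTorus d → ℂ} (hf : MemLp f 2) :
    Summable fun n => ‖mFourierCoeff f n‖ ^ 2 := by
  have h : mFourierCoeff (hf.toLp f) = mFourierCoeff f := funext fun n =>
    integral_congr_ae (by filter_upwards [hf.coeFn_toLp] with y hy; rw [hy])
  simpa [h] using (hasSum_sq_mFourierCoeff (hf.toLp f)).summable

lemma mFourier_apply_coe (k : d → ℤ) (x : d → ℝ) :
    mFourier k (fun i => (x i : UnitAddCircle))
      = Complex.exp (Complex.I * ↑(2 * π * ∑ i, (k i : ℝ) * x i)) := by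
  simp only [mFourier, ContinuousMap.coe_mk, fourier_coe_apply, ← Complex.exp_sum]
  congr 1
  push_cast
  rw [Finset.mul_sum, Finset.mul_sum]
  exact Finset.sum_congr rfl fun i _ => by ring

lemma norm_one_sub_mFourier_coe_le (k : d → ℤ) (x : d → ℝ) :
    ‖1 - mFourier k (fun i => (x i : UnitAddCircle))‖ ≤ 2 * π * (∑ i, |(k i : ℝ)|) * ‖x‖ := by
  rw [mFourier_apply_coe, norm_sub_rev]
  refine Real.norm_exp_I_mul_ofReal_sub_one_le.trans ?_
  rw [Real.norm_eq_abs, abs_mul, abs_of_pos (by positivity : (0 : ℝ) < 2 * π), mul_assoc (2 * π),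
    Finset.sum_mul]
  gcongr
  refine (Finset.abs_sum_le_sum_abs _ _).trans (Finset.sum_le_sum fun i _ => ?_)
  rw [abs_mul]
  gcongr
  exact norm_le_pi_norm x i

variable [DecidableEq d]

noncomputable def laplacianSymbol (y : UnitAddTorus d) : ℝ :=
  ∑ j, ‖1 - mFourier (Pi.single j 1) y‖ ^ 2

lemma laplacianSymbol_eq_sum (y : UnitAddTorus d) :
    (laplacianSymbol y : ℂ)
      = ∑ j, (2 - mFourier (Pi.single j 1) y - mFourier (-Pi.single j 1) y) := by
  push_cast [laplacianSymbol]
  refine Finset.sum_congr rfl fun j _ => ?_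
  have h := norm_mFourier_apply (Pi.single j 1) y
  rw [mFourier_neg, ← Complex.conj_mul', map_sub, map_one]
  have : conj (mFourier (Pi.single j 1) y) * mFourier (Pi.single j 1) y = 1 := by
    rw [Complex.conj_mul', h]; simp
  linear_combination this

lemma mFourier_eq_one_of_laplacianSymbol_eq_zero {y : UnitAddTorus d} (hy : laplacianSymbol y = 0)
    (k : d → ℤ) : mFourier k y = 1 := by
  have hj : ∀ j, fourier 1 (y j) = 1 := fun j => by
    have := (Finset.sum_eq_zero_iff_of_nonneg fun i _ => by positivity).1 hy j (Finset.mem_univ j)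
    rw [mFourier_single, sq_eq_zero_iff, norm_eq_zero, sub_eq_zero] at this
    exact this.symm
  simp only [mFourier, ContinuousMap.coe_mk]
  refine Finset.prod_eq_one fun j _ => ?_
  rw [fourier_apply, AddCircle.toCircle_zsmul, Circle.coe_zpow, ← fourier_one, hj j, one_zpow]

-- At the zero of `laplacianSymbol` this is the junk value `x / 0 = 0`, which is harmless because
-- the numerator vanishes there as well (`mFourier_eq_one_of_laplacianSymbol_eq_zero`).
noncomputable def dipoleSymbol (k : d → ℤ) (y : UnitAddTorus d) : ℂ :=
  (1 - mFourier k y) / laplacianSymbol y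

lemma laplacianSymbol_mul_dipoleSymbol (k : d → ℤ) (y : UnitAddTorus d) :
    laplacianSymbol y * dipoleSymbol k y = 1 - mFourier k y := by
  by_cases hy : laplacianSymbol y = 0
  · simp [dipoleSymbol, hy, mFourier_eq_one_of_laplacianSymbol_eq_zero hy]
  · exact mul_div_cancel₀ _ (by exact_mod_cast hy)

lemma mFourierCoeff_laplacianSymbol_mul {f : UnitAddTorus d → ℂ} (hf : Integrable f) (n : d → ℤ) :
    mFourierCoeff (fun y => laplacianSymbol y * f y) n
      = ∑ j, (2 * mFourierCoeff f n - mFourierCoeff f (n - Pi.single j 1)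
          - mFourierCoeff f (n + Pi.single j 1)) := by
  have hint : ∀ m, Integrable (fun y => mFourier (-n) y * (mFourier m y * f y)) :=
    fun m => integrable_mFourier_mul (integrable_mFourier_mul hf m) (-n)
  calc mFourierCoeff (fun y => laplacianSymbol y * f y) n
      = ∫ y, ∑ j, (2 * (mFourier (-n) y * f y)
          - mFourier (-n) y * (mFourier (Pi.single j 1) y * f y)
          - mFourier (-n) y * (mFourier (-Pi.single j 1) y * f y)) := by
        refine integral_congr_ae (Filter.Eventually.of_forall fun y => ?_)
        dsimp only
        rw [smul_eq_mul, laplacianSymbol_eq_sum, Finset.sum_mul, Finset.mul_sum]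
        exact Finset.sum_congr rfl fun j _ => by ring
    _ = ∑ j, (2 * mFourierCoeff f n - mFourierCoeff (fun y => mFourier (Pi.single j 1) y * f y) n
          - mFourierCoeff (fun y => mFourier (-Pi.single j 1) y * f y) n) := by
        have h2 : Integrable (fun y => 2 * (mFourier (-n) y * f y)) :=
          (integrable_mFourier_mul hf _).const_mul 2
        have h3 : ∀ m, Integrable (fun y => 2 * (mFourier (-n) y * f y)
            - mFourier (-n) y * (mFourier m y * f y)) := fun m => h2.sub (hint m)
        rw [integral_finsetSum _ fun j _ => ?_]
        · refine Finset.sum_congr rfl fun j _ => ?_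
          rw [integral_sub (h3 _) (hint _), integral_sub h2 (hint _), integral_const_mul]
          rfl
        · exact (h3 _).sub (hint _)
    _ = _ := by simp only [mFourierCoeff_mFourier_mul, sub_neg_eq_add]

lemma laplacianSymbol_coe (x : d → ℝ) :
    laplacianSymbol (fun i => (x i : UnitAddCircle)) = ∑ j, (2 * sin (π * x j)) ^ 2 := by
  refine Finset.sum_congr rfl fun j _ => ?_
  rw [mFourier_single, fourier_coe_apply, norm_sub_rev,
    show 2 * π * Complex.I * ((1 : ℤ) : ℂ) * (x j : ℂ) / ((1 : ℝ) : ℂ)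
      = Complex.I * ↑(2 * π * x j) by push_cast; ring,
    Complex.norm_exp_I_mul_ofReal_sub_one, Real.norm_eq_abs, sq_abs]
  ring_nf

lemma sq_norm_le_laplacianSymbol_coe {x : d → ℝ} (hx : ‖x‖ ≤ 1 / 2) :
    16 * ‖x‖ ^ 2 ≤ laplacianSymbol (fun i => (x i : UnitAddCircle)) := by
  rw [laplacianSymbol_coe]
  refine (mul_le_mul_of_nonneg_left (sq_norm_le_sum_sq x) (by norm_num)).trans ?_
  rw [Finset.mul_sum]
  refine Finset.sum_le_sum fun j _ => ?_
  have hj : |π * x j| ≤ π / 2 := by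
    rw [abs_mul, abs_of_pos pi_pos]
    nlinarith [pi_pos, (Real.norm_eq_abs (x j)) ▸ norm_le_pi_norm x j]
  have hsin := Real.mul_abs_le_abs_sin hj
  rw [abs_mul, abs_of_pos pi_pos, ← mul_assoc, div_mul_cancel₀ _ pi_ne_zero] at hsin
  rw [mul_pow, ← sq_abs (sin _), ← sq_abs (x j)]
  nlinarith [abs_nonneg (x j)]

lemma norm_dipoleSymbol_coe_le (k : d → ℤ) {x : d → ℝ} (hx : ‖x‖ ≤ 1 / 2) :
    ‖dipoleSymbol k (fun i => (x i : UnitAddCircle))‖ ≤ π * (∑ i, |(k i : ℝ)|) / 8 * ‖x‖⁻¹ := by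
  have hnum := norm_one_sub_mFourier_coe_le k x
  rw [dipoleSymbol, norm_div]
  rcases eq_or_ne x 0 with rfl | hx0
  · rw [norm_zero, mul_zero] at hnum
    rw [le_antisymm hnum (norm_nonneg _), zero_div, norm_zero, inv_zero, mul_zero]
  have hpos : 0 < ‖x‖ := norm_pos_iff.2 hx0
  have hσ := sq_norm_le_laplacianSymbol_coe hx
  rw [Complex.norm_real, Real.norm_eq_abs, abs_of_pos (lt_of_lt_of_le (by positivity) hσ)]
  calc _ ≤ 2 * π * (∑ i, |(k i : ℝ)|) * ‖x‖ / (16 * ‖x‖ ^ 2) :=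
        div_le_div₀ (by positivity) hnum (by positivity) hσ
    _ = π * (∑ i, |(k i : ℝ)|) / 8 * ‖x‖⁻¹ := by field_simp; ring

lemma measurable_dipoleSymbol (k : d → ℤ) : Measurable (dipoleSymbol k) := by
  have hσ : Continuous (laplacianSymbol (d := d)) := by unfold laplacianSymbol; fun_prop
  exact (continuous_const.sub (mFourier k).continuous).measurable.div
    (Complex.continuous_ofReal.comp hσ).measurable

lemma memLp_dipoleSymbol (hd : 2 < Fintype.card d) (k : d → ℤ) :
    MemLp (dipoleSymbol k) 2 := by
  have hmeas := (measurable_dipoleSymbol k).aestronglyMeasurable (μ := volume)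
  rw [memLp_two_iff_integrable_sq_norm hmeas]
  refine ⟨hmeas.norm.pow 2, ?_⟩
  set F : (d → ℝ) → ℝ := fun x => ‖dipoleSymbol k (fun i => (x i : UnitAddCircle))‖ ^ 2
  have hball : IntegrableOn F (ball 0 (1 / 2)) := by
    refine integrableOn_ball_of_norm_le_rpow (α := 2) (C := (π * (∑ i, |(k i : ℝ)|) / 8) ^ 2)
      (by rw [Module.finrank_fintype_fun_eq_card]; omega)
      (by rw [Module.finrank_fintype_fun_eq_card]; exact_mod_cast hd) ?_ ?_
    · refine ae_restrict_of_forall_mem measurableSet_ball fun x hx => ?_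
      rw [Real.norm_eq_abs, abs_of_nonneg (by positivity), Real.rpow_neg (norm_nonneg _),
        Real.rpow_two, ← inv_pow, ← mul_pow]
      exact pow_le_pow_left₀ (norm_nonneg _)
        (norm_dipoleSymbol_coe_le k (mem_ball_zero_iff.1 hx).le) 2
    · exact ((measurable_dipoleSymbol k).comp (by fun_prop)).norm.pow_const 2
        |>.aestronglyMeasurable
  have hbox :
      {x : d → ℝ | ∀ i, x i ∈ Set.Ioc (-1 / 2) (-1 / 2 + 1)} =ᵐ[volume] ball 0 (1 / 2) := by
    have hIoc : {x : d → ℝ | ∀ i, x i ∈ Set.Ioc (-1 / 2) (-1 / 2 + 1)}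
        = Set.univ.pi fun _ => Set.Ioc (-1 / 2) (1 / 2) := by
      ext x; norm_num [Set.mem_pi]
    have hIoo : ball (0 : d → ℝ) (1 / 2) = Set.univ.pi fun _ => Set.Ioo (-1 / 2) (1 / 2) := by
      rw [ball_pi _ (by norm_num)]; ext x; norm_num [Set.mem_pi, Real.ball_eq_Ioo]
    rw [hIoc, hIoo, volume_pi]
    exact Measure.pi_Ioo_ae_eq_pi_Ioc.symm
  unfold HasFiniteIntegral
  rw [lintegral_preimage _ (fun _ => -1 / 2)]
  exact (hball.congr_set_ae hbox).2

end UnitAddTorus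

/-- On the lattice `ℤ^D` with `D ≥ 3` and conductance `1`, the potential equation
`Δv = δ_0 − δ_k` has a square-summable solution. -/
theorem lattice_potential_l2 (D : ℕ) (hD : 3 ≤ D) (k : Fin D → ℤ) :
    ∃ v : (Fin D → ℤ) → ℝ,
      Summable (fun n : Fin D → ℤ => (v n) ^ 2)
      ∧ ∀ n : Fin D → ℤ,
          (∑ j : Fin D, (2 * v n - v (n - Pi.single j 1) - v (n + Pi.single j 1)))
            = (if n = 0 then 1 else 0) - (if n = k then 1 else 0) := by
  have hg : MemLp (dipoleSymbol k) 2 :=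
    memLp_dipoleSymbol (by simp only [Fintype.card_fin]; omega) k
  refine ⟨fun n => (mFourierCoeff (dipoleSymbol k) n).re, ?_, fun n => ?_⟩
  · refine (summable_sq_norm_mFourierCoeff hg).of_nonneg_of_le (fun n => sq_nonneg _) fun n => ?_
    rw [← sq_abs]
    exact pow_le_pow_left₀ (abs_nonneg _) (Complex.abs_re_le_norm _) 2
  · have h := congrArg Complex.re (mFourierCoeff_laplacianSymbol_mul (hg.integrable one_le_two) n)
    simp only [laplacianSymbol_mul_dipoleSymbol, mFourierCoeff_one_sub_mFourier, Complex.re_sum,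
      Complex.sub_re, Complex.mul_re, Complex.re_ofNat, Complex.im_ofNat, zero_mul, sub_zero] at h
    refine h.symm.trans ?_
    split_ifs <;> simp
end

section
/- Define f : ℝ → ℝ by f(x) = exp(−1/x)/x for x > 0 and f(x) = 0 for x ≤ 0, and let g(t) = t·f(t). Then: (i) f is not identically zero; (ii) f is square-integrable on ℝ (∫ f(x)² dx < ∞); (iii) g is differentiable at every point of ℝ; and (iv) for every x ∈ ℝ, x · g′(x) = f(x). Consequently f is a nonzero L²(ℝ) solution of the deficiency equation x·(d/dx)(x·f) = f arising (in the Schrödinger representation P = (1/i) d/dx, Q = multiplication by x) from the Heisenberg monomial operator M = QPQ, witnessing that the banded Hermitian operator M is not essentially selfadjoint. -/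
open MeasureTheory Filter Topology Set

/-! The function `x * f x` is the smooth gluing function `g = expNegInvGlue`, so `f = g / x`
and the deficiency equation `x * g' = f` is the ODE `x ^ 2 * g' = g` of `exp (-1/x)`. Since
`g ^ 2 = g (· / 2)`, the square `f ^ 2 = g (x / 2) / x ^ 2` is a rescaled copy of `g' = g / x ^ 2`,
which is integrable because `g` increases to a finite limit at `+∞`. -/

namespace expNegInvGlue

theorem eq_exp_neg_inv {x : ℝ} (hx : 0 < x) : expNegInvGlue x = Real.exp (-x⁻¹) :=
  if_neg hx.not_ge

theorem sq_eq_comp_half (x : ℝ) : expNegInvGlue x ^ 2 = expNegInvGlue (x / 2) := by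
  rcases le_or_gt x 0 with hx | hx
  · rw [zero_of_nonpos hx, zero_of_nonpos (by linarith)]
    norm_num
  · rw [eq_exp_neg_inv hx, eq_exp_neg_inv (half_pos hx), ← Real.exp_nat_mul]
    congr 1
    field_simp
    norm_num

theorem hasDerivAt_of_pos {x : ℝ} (hx : 0 < x) :
    HasDerivAt expNegInvGlue (expNegInvGlue x / x ^ 2) x := by
  have hexp : HasDerivAt (fun y => Real.exp (-y⁻¹)) (Real.exp (-x⁻¹) * (x ^ 2)⁻¹) x := by
    simpa using ((hasDerivAt_inv hx.ne').neg).exp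
  rw [eq_exp_neg_inv hx, div_eq_mul_inv]
  exact hexp.congr_of_eventuallyEq <|
    eventually_of_mem (Ioi_mem_nhds hx) fun y hy => eq_exp_neg_inv hy

theorem sq_mul_deriv (x : ℝ) : x ^ 2 * deriv expNegInvGlue x = expNegInvGlue x := by
  rcases lt_trichotomy x 0 with hx | rfl | hx
  · have hzero : expNegInvGlue =ᶠ[𝓝 x] fun _ => 0 :=
      eventually_of_mem (Iio_mem_nhds hx) fun y hy => zero_of_nonpos hy.le
    rw [hzero.deriv_eq, deriv_const, mul_zero, zero_of_nonpos hx.le]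
  · simp
  · rw [(hasDerivAt_of_pos hx).deriv]
    field_simp

theorem mul_deriv (x : ℝ) : x * deriv expNegInvGlue x = expNegInvGlue x / x := by
  rcases eq_or_ne x 0 with rfl | hx
  · simp
  · rw [← sq_mul_deriv x]
    field_simp

theorem tendsto_atTop : Tendsto expNegInvGlue atTop (𝓝 1) := by
  have hexp : Tendsto (fun x : ℝ => Real.exp (-x⁻¹)) atTop (𝓝 1) := by
    simpa [Function.comp_def] using
      (Real.continuous_exp.tendsto _).comp (tendsto_inv_atTop_zero (𝕜 := ℝ)).neg
  exact hexp.congr' <| eventually_of_mem (Ioi_mem_atTop 0) fun x hx => (eq_exp_neg_inv hx).symm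

theorem integrable_div_sq : Integrable fun x => expNegInvGlue x / x ^ 2 := by
  have hIoi : IntegrableOn (fun x => expNegInvGlue x / x ^ 2) (Ioi 0) :=
    integrableOn_Ioi_deriv_of_nonneg
      (expNegInvGlue.contDiff (n := 0)).continuous.continuousWithinAt
      (fun _ hx => hasDerivAt_of_pos hx) (fun x _ => div_nonneg (nonneg x) (sq_nonneg x))
      tendsto_atTop
  have hsupp : ∀ x ∉ Ioi (0 : ℝ), expNegInvGlue x / x ^ 2 = 0 := fun x hx => by
    rw [zero_of_nonpos (not_lt.1 hx), zero_div]
  simpa only [indicator_eq_self.2 (Function.support_subset_iff'.2 hsupp)] using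
    (integrable_indicator_iff measurableSet_Ioi).2 hIoi

end expNegInvGlue

/-- The function `f(x) = exp(−1/x)/x` for `x > 0`, `f(x) = 0` for `x ≤ 0`, is a nonzero
square-integrable solution of the deficiency equation `x·(d/dx)(x·f) = f` for the Heisenberg
monomial operator `M = QPQ`, witnessing that `M` is not essentially selfadjoint. -/
theorem heisenberg_QPQ_defect_vector (f : ℝ → ℝ)
    (hf : ∀ x : ℝ, f x = if 0 < x then Real.exp (-1 / x) / x else 0) :
    f ≠ 0
    ∧ Integrable (fun x : ℝ => (f x) ^ 2)
    ∧ (∀ x : ℝ, DifferentiableAt ℝ (fun t : ℝ => t * f t) x)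
    ∧ (∀ x : ℝ, x * deriv (fun t : ℝ => t * f t) x = f x) := by
  have hf_eq : f = fun x => expNegInvGlue x / x := by
    funext x
    rw [hf x]
    split_ifs with hx
    · rw [expNegInvGlue.eq_exp_neg_inv hx, neg_div, one_div]
    · rw [expNegInvGlue.zero_of_nonpos (not_lt.1 hx), zero_div]
  have hg : (fun t => t * f t) = expNegInvGlue := by
    funext t
    rw [hf_eq, mul_div_cancel_of_imp' fun ht => ht ▸ expNegInvGlue.zero]
  have hf_sq : (fun x => f x ^ 2) = fun x => expNegInvGlue (x / 2) / (x / 2) ^ 2 / 4 := by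
    funext x
    rw [hf_eq, div_pow, expNegInvGlue.sq_eq_comp_half]
    ring
  subst hf_eq
  refine ⟨fun h => ?_, ?_, ?_, ?_⟩
  · exact (expNegInvGlue.pos_of_pos one_pos).ne' (by simpa using congrFun h 1)
  · rw [hf_sq]
    exact (expNegInvGlue.integrable_div_sq.comp_div two_ne_zero).div_const 4
  · rw [hg]
    exact (expNegInvGlue.contDiff (n := 1)).differentiable one_ne_zero
  · rw [hg]
    exact expNegInvGlue.mul_deriv
end
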